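/- arXiv:1606.00661 — 6 statements merged into one kernel-verified Lean document; each statement's English description precedes it below -/
import Mathlib

section
/- Let X be a compact Hausdorff topological space and let ρ : X × X → ℝ be continuous with ρ(x,y) ≥ 0 for all x,y, ρ(x,x) = 0 for all x, and ρ(x,y) = ρ(y,x) for all x,y. Then the following are equivalent: (a) for all x, y ∈ X, ρ(x,y) = 0 implies x = y; (b) for every continuous function ν : X × X → ℝ with ν(x,y) ≥ 0 for all x,y, ν(x,y) = ν(y,x) for all x,y, and ν(x,x) = 1 for all x, the function ρ + ν vanishes nowhere on X × X (equivalently, ρ + ν is invertible in the algebra C(X × X)). -/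
open unitInterval

/-- For `f : X → [0, 1]` with `f x = 0` and `f y = 1`, take `ν (a, b) = 1 - (f a - f b) ^ 2`. -/
theorem exists_symm_kernel_eq_zero_of_ne {X : Type*} [TopologicalSpace X] [T35Space X]
    {x y : X} (hxy : x ≠ y) :
    ∃ ν : X × X → ℝ, Continuous ν ∧ (∀ a b : X, 0 ≤ ν (a, b)) ∧
      (∀ a b : X, ν (a, b) = ν (b, a)) ∧ (∀ a : X, ν (a, a) = 1) ∧ ν (x, y) = 0 := by
  obtain ⟨f, hf, hfx, hfy⟩ :=
    CompletelyRegularSpace.completely_regular x {y} isClosed_singleton hxy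
  refine ⟨fun p => 1 - ((f p.1 : ℝ) - f p.2) ^ 2, by fun_prop, fun a b => ?_,
    fun a b => by ring, fun a => by simp, by simp [hfx, hfy rfl]⟩
  nlinarith [nonneg (f a), le_one (f a), nonneg (f b), le_one (f b)]

theorem stmt1_general {X : Type*} [TopologicalSpace X] [CompactSpace X] [T2Space X]
    (ρ : X × X → ℝ)
    (hρ_nonneg : ∀ x y : X, 0 ≤ ρ (x, y)) :
    (∀ x y : X, ρ (x, y) = 0 → x = y) ↔
      (∀ ν : X × X → ℝ, Continuous ν → (∀ x y : X, 0 ≤ ν (x, y)) →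
        (∀ x y : X, ν (x, y) = ν (y, x)) → (∀ x : X, ν (x, x) = 1) →
        ∀ p : X × X, ρ p + ν p ≠ 0) := by
  constructor
  · intro hsep ν _ hν_nonneg _ hν_diag ⟨x, y⟩ hsum
    obtain ⟨hρ0, hν0⟩ := (add_eq_zero_iff_of_nonneg (hρ_nonneg x y) (hν_nonneg x y)).mp hsum
    rw [hsep x y hρ0, hν_diag] at hν0
    exact one_ne_zero hν0
  · intro hinv x y hρ0
    by_contra hxy
    obtain ⟨ν, hν_cont, hν_nonneg, hν_symm, hν_diag, hν0⟩ := exists_symm_kernel_eq_zero_of_ne hxy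
    exact hinv ν hν_cont hν_nonneg hν_symm hν_diag (x, y) (by rw [hρ0, hν0, add_zero])

/-- For a compact Hausdorff space `X` and a continuous, nonnegative,
symmetric `ρ : X × X → ℝ` vanishing on the diagonal, the separation condition
(`ρ(x,y) = 0 → x = y`) is equivalent to: for every continuous nonnegative symmetric
`ν : X × X → ℝ` with `ν(x,x) = 1` for all `x`, the function `ρ + ν` vanishes nowhere
(equivalently, `ρ + ν` is invertible in `C(X × X)`). -/
theorem stmt1 {X : Type*} [TopologicalSpace X] [CompactSpace X] [T2Space X]
    (ρ : X × X → ℝ) (hρ_cont : Continuous ρ)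
    (hρ_nonneg : ∀ x y : X, 0 ≤ ρ (x, y))
    (hρ_diag : ∀ x : X, ρ (x, x) = 0)
    (hρ_symm : ∀ x y : X, ρ (x, y) = ρ (y, x)) :
    (∀ x y : X, ρ (x, y) = 0 → x = y) ↔
      (∀ ν : X × X → ℝ, Continuous ν → (∀ x y : X, 0 ≤ ν (x, y)) →
        (∀ x y : X, ν (x, y) = ν (y, x)) → (∀ x : X, ν (x, x) = 1) →
        ∀ p : X × X, ρ p + ν p ≠ 0) :=
  stmt1_general ρ hρ_nonneg
end

section
/- Let λ > 0 be real and let ρ be the matrix indexed by (Fin 2 × Fin 2) with entries ρ_{(1,2),(1,2)} = ρ_{(2,1),(2,1)} = λ, ρ_{(1,2),(2,1)} = ρ_{(2,1),(1,2)} = −λ, and all other entries 0. Let M := ρ ⊗ 1 + 1 ⊗ ρ − 𝔐(ρ), a matrix indexed by Fin 2 × Fin 2 × Fin 2. Then for every real vector X = (x_{ijk})_{i,j,k∈{1,2}} one has ⟨MX, X⟩ = λ[(x_{121} − x_{112} − x_{211})² + (x_{121}² − x_{112}² − x_{211}²) + (x_{212} − x_{122} − x_{221})² + (x_{212}² − x_{122}²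 − x_{221}²)], and consequently M is not positive semidefinite (there exists a real vector X with ⟨MX, X⟩ < 0). -/
/-! The quadratic form of `M` splits into quadratic forms of `ρ` on two-index slices of `X`, and
`ρ` has quadratic form `λ (y₁₂ - y₂₁)²`. Writing `a = x₁₂₁, b = x₁₁₂, c = x₂₁₁`, the three slices
through these entries contribute `λ((a - c)² + (b - a)² - (b - c)²) = 2λ(a - b)(a - c)`, and
similarly for the other three coordinates; this is negative at `a = 1, b = 2, c = 0`. -/

open Matrix
open scoped ComplexOrder

variable {ι : Type*} [Fintype ι] [DecidableEq ι]

/-- `ρ ⊗ 1`, defined entrywise on triple indices: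
`(ρ ⊗ 1)_{(i,j,k),(i',j',k')} = ρ_{(i,j),(i',j')} δ_{kk'}`. -/
def tensorOne (ρ : Matrix (ι × ι) (ι × ι) ℂ) : Matrix (ι × ι × ι) (ι × ι × ι) ℂ :=
  fun p q => ρ (p.1, p.2.1) (q.1, q.2.1) * (if p.2.2 = q.2.2 then 1 else 0)

/-- `1 ⊗ ρ`, defined entrywise on triple indices:
`(1 ⊗ ρ)_{(i,j,k),(i',j',k')} = δ_{ii'} ρ_{(j,k),(j',k')}`. -/
def oneTensor (ρ : Matrix (ι × ι) (ι × ι) ℂ) : Matrix (ι × ι × ι) (ι × ι × ι) ℂ :=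
  fun p q => (if p.1 = q.1 then 1 else 0) * ρ (p.2.1, p.2.2) (q.2.1, q.2.2)

/-- The middle-unit map `𝔐`, with `𝔐(a ⊗ b) = a ⊗ 1 ⊗ b`, defined entrywise:
`𝔐(ρ)_{(i,k,j),(i',k',j')} = δ_{kk'} ρ_{(i,j),(i',j')}`. -/
def midUnit (ρ : Matrix (ι × ι) (ι × ι) ℂ) : Matrix (ι × ι × ι) (ι × ι × ι) ℂ :=
  fun p q => (if p.2.1 = q.2.1 then 1 else 0) * ρ (p.1, p.2.2) (q.1, q.2.2)

/-- The candidate quantum metric on `qM₂(ℂ)`: `ρ_{(1,2),(1,2)} = ρ_{(2,1),(2,1)} = λ`,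
`ρ_{(1,2),(2,1)} = ρ_{(2,1),(1,2)} = −λ`, all other entries `0` (indices `1,2` are
rendered as `0,1 : Fin 2`). -/
def rhoLam (lam : ℝ) : Matrix (Fin 2 × Fin 2) (Fin 2 × Fin 2) ℂ := fun p q =>
  if p = ((0 : Fin 2), (1 : Fin 2)) ∧ q = ((0 : Fin 2), (1 : Fin 2)) then (lam : ℂ)
  else if p = ((1 : Fin 2), (0 : Fin 2)) ∧ q = ((1 : Fin 2), (0 : Fin 2)) then (lam : ℂ)
  else if p = ((0 : Fin 2), (1 : Fin 2)) ∧ q = ((1 : Fin 2), (0 : Fin 2)) then -(lam : ℂ)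
  else if p = ((1 : Fin 2), (0 : Fin 2)) ∧ q = ((0 : Fin 2), (1 : Fin 2)) then -(lam : ℂ)
  else 0

open scoped Kronecker

def quadForm {m R : Type*} [Fintype m] [CommSemiring R] (M : Matrix m m R) (x : m → R) : R :=
  ∑ p, ∑ q, x p * M p q * x q

section QuadForm

variable {m n k R : Type*} [Fintype m] [Fintype n]

lemma quadForm_add [CommSemiring R] (M N : Matrix m m R) (x : m → R) :
    quadForm (M + N) x = quadForm M x + quadForm N x := by
  simp only [quadForm, Matrix.add_apply, mul_add, add_mul, Finset.sum_add_distrib]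

lemma quadForm_sub [CommRing R] (M N : Matrix m m R) (x : m → R) :
    quadForm (M - N) x = quadForm M x - quadForm N x := by
  simp only [quadForm, Matrix.sub_apply, mul_sub, sub_mul, Finset.sum_sub_distrib]

lemma quadForm_submatrix_equiv [CommSemiring R] (M : Matrix n n R) (e : m ≃ n) (x : m → R) :
    quadForm (M.submatrix e e) x = quadForm M (x ∘ e.symm) := by
  simp only [quadForm, submatrix_apply]
  rw [← e.sum_comp]
  refine Fintype.sum_congr _ _ fun p => ?_
  rw [← e.sum_comp]
  simp

lemma quadForm_kronecker_one [Fintype k] [DecidableEq k] [CommSemiring R] (A : Matrix n n R)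
    (x : n × k → R) :
    quadForm (A ⊗ₖ (1 : Matrix k k R)) x = ∑ c, quadForm A (fun a => x (a, c)) := by
  simp only [quadForm, kroneckerMap_apply, one_apply, mul_ite, ite_mul, mul_one, mul_zero,
    zero_mul, Fintype.sum_prod_type, Finset.sum_ite_eq, Finset.mem_univ, if_true]
  exact Finset.sum_comm

lemma Matrix.PosSemidef.quadForm_nonneg_of_star_eq [CommRing R] [PartialOrder R] [StarRing R]
    {M : Matrix m m R} (hM : M.PosSemidef) {x : m → R} (hx : star x = x) :
    0 ≤ quadForm M x := by
  have h := hM.dotProduct_mulVec_nonneg x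
  rw [hx] at h
  simpa only [dotProduct, mulVec, Finset.mul_sum, mul_assoc, quadForm] using h

end QuadForm

def middleToLast {κ : Type*} : κ × κ × κ ≃ (κ × κ) × κ where
  toFun p := ((p.1, p.2.2), p.2.1)
  invFun q := (q.1.1, q.2, q.1.2)
  left_inv _ := rfl
  right_inv _ := rfl

section Tensor

variable {κ : Type*} [DecidableEq κ] (ρ : Matrix (κ × κ) (κ × κ) ℂ)

lemma tensorOne_eq_submatrix :
    tensorOne ρ = (ρ ⊗ₖ 1).submatrix (Equiv.prodAssoc κ κ κ).symm (Equiv.prodAssoc κ κ κ).symm := by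
  ext p q
  simp [tensorOne, one_apply]

lemma oneTensor_eq_submatrix :
    oneTensor ρ = (ρ ⊗ₖ 1).submatrix (Equiv.prodComm κ (κ × κ)) (Equiv.prodComm κ (κ × κ)) := by
  ext p q
  simp [oneTensor, one_apply, mul_comm]

lemma midUnit_eq_submatrix : midUnit ρ = (ρ ⊗ₖ 1).submatrix middleToLast middleToLast := by
  ext p q
  simp [midUnit, middleToLast, one_apply, mul_comm]

lemma quadForm_tensorOne_add_oneTensor_sub_midUnit [Fintype κ] (x : κ × κ × κ → ℂ) :
    quadForm (tensorOne ρ + oneTensor ρ - midUnit ρ) x =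
      ∑ c, quadForm ρ (fun a => x (a.1, a.2, c)) + ∑ c, quadForm ρ (fun a => x (c, a.1, a.2)) -
        ∑ c, quadForm ρ (fun a => x (a.1, c, a.2)) := by
  rw [quadForm_sub, quadForm_add, tensorOne_eq_submatrix, oneTensor_eq_submatrix,
    midUnit_eq_submatrix]
  simp only [quadForm_submatrix_equiv, quadForm_kronecker_one]
  rfl

end Tensor

lemma quadForm_rhoLam (lam : ℝ) (y : Fin 2 × Fin 2 → ℂ) :
    quadForm (rhoLam lam) y = lam * (y (0, 1) - y (1, 0)) ^ 2 := by
  simp only [quadForm, rhoLam, Fintype.sum_prod_type, Fin.sum_univ_two, Prod.mk.injEq]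
  norm_num
  ring

/-- for `λ > 0` and `M = ρ ⊗ 1 + 1 ⊗ ρ − 𝔐(ρ)`, the quadratic form of `M`
on every real vector `X = (x_{ijk})` equals
`λ[(x₁₂₁−x₁₁₂−x₂₁₁)² + (x₁₂₁²−x₁₁₂²−x₂₁₁²) + (x₂₁₂−x₁₂₂−x₂₂₁)² + (x₂₁₂²−x₁₂₂²−x₂₂₁²)]`,
and consequently `M` is not positive semidefinite. -/
theorem stmt4 (lam : ℝ) (hlam : 0 < lam)
    (M : Matrix (Fin 2 × Fin 2 × Fin 2) (Fin 2 × Fin 2 × Fin 2) ℂ)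
    (hM : M = tensorOne (rhoLam lam) + oneTensor (rhoLam lam) - midUnit (rhoLam lam)) :
    (∀ X : Fin 2 × Fin 2 × Fin 2 → ℝ,
      ∑ p : Fin 2 × Fin 2 × Fin 2, ∑ q : Fin 2 × Fin 2 × Fin 2,
          (X p : ℂ) * M p q * (X q : ℂ) =
        ((lam * ((X (0, 1, 0) - X (0, 0, 1) - X (1, 0, 0)) ^ 2 +
            (X (0, 1, 0) ^ 2 - X (0, 0, 1) ^ 2 - X (1, 0, 0) ^ 2) +
            (X (1, 0, 1) - X (0, 1, 1) - X (1, 1, 0)) ^ 2 +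
            (X (1, 0, 1) ^ 2 - X (0, 1, 1) ^ 2 - X (1, 1, 0) ^ 2)) : ℝ) : ℂ)) ∧
    (∃ X : Fin 2 × Fin 2 × Fin 2 → ℝ,
      ∑ p : Fin 2 × Fin 2 × Fin 2, ∑ q : Fin 2 × Fin 2 × Fin 2,
          (X p : ℂ) * M p q * (X q : ℂ) < 0) ∧
    ¬ M.PosSemidef := by
  have hform : ∀ X : Fin 2 × Fin 2 × Fin 2 → ℝ, quadForm M (fun p => (X p : ℂ)) =
      ((lam * ((X (0, 1, 0) - X (0, 0, 1) - X (1, 0, 0)) ^ 2 +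
        (X (0, 1, 0) ^ 2 - X (0, 0, 1) ^ 2 - X (1, 0, 0) ^ 2) +
        (X (1, 0, 1) - X (0, 1, 1) - X (1, 1, 0)) ^ 2 +
        (X (1, 0, 1) ^ 2 - X (0, 1, 1) ^ 2 - X (1, 1, 0) ^ 2)) : ℝ) : ℂ) := by
    intro X
    simp only [hM, quadForm_tensorOne_add_oneTensor_sub_midUnit, quadForm_rhoLam,
      Fin.sum_univ_two]
    push_cast
    ring
  let X₀ : Fin 2 × Fin 2 × Fin 2 → ℝ := fun p =>
    if p = (0, 1, 0) then 1 else if p = (0, 0, 1) then 2 else 0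
  have hneg : quadForm M (fun p => (X₀ p : ℂ)) < 0 := by
    rw [hform]
    norm_num [X₀, hlam]
  exact ⟨hform, ⟨X₀, hneg⟩, fun hpsd =>
    hneg.not_ge (hpsd.quadForm_nonneg_of_star_eq (by ext; simp))⟩
end

section
/- There is no quantum metric on the two-point noncommutative space qM₂(ℂ): there exists no matrix ρ indexed by Fin 2 × Fin 2 (i.e. no element of M₂(ℂ) ⊗ M₂(ℂ)) satisfying all of: (i)' ρ is positive semidefinite; (ii)' ρ P_δ = P_δ ρ = 0; (iii)' every vector x with ρ x = 0 lies in the range of P_δ; (iv)' 𝔉(ρ) = ρ; (v)' ρ ⊗ 1 + 1 ⊗ ρ − 𝔐(ρ) is positive semidefinite. -/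
open Matrix
open scoped ComplexOrder

variable {ι : Type*} [Fintype ι] [DecidableEq ι]

/-- The flip `𝔉`, with `𝔉(a ⊗ b) = b ⊗ a`: `𝔉(ρ)_{(i,j),(k,l)} = ρ_{(j,i),(l,k)}`. -/
def flipOp (ρ : Matrix (ι × ι) (ι × ι) ℂ) : Matrix (ι × ι) (ι × ι) ℂ :=
  fun p q => ρ (p.2, p.1) (q.2, q.1)

/-- The swap matrix `S_{(i,j),(k,l)} = δ_{il} δ_{jk}`. -/
def swapMatrix : Matrix (ι × ι) (ι × ι) ℂ :=
  fun p q => if p.1 = q.2 ∧ p.2 = q.1 then 1 else 0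

/-- `P_δ = (1 + S)/2`, the orthogonal projection onto the symmetric subspace:
the characteristic function of the diagonal for `Mₙ(ℂ)` in its identity
representation. -/
noncomputable def Pdelta : Matrix (ι × ι) (ι × ι) ℂ :=
  (2 : ℂ)⁻¹ • (1 + swapMatrix)

/-- A quantum metric on `qMₙ(ℂ)` (w.r.t. the identity representation): a matrix
`ρ ∈ Mₙ(ℂ) ⊗ Mₙ(ℂ)` satisfying (i)' positivity, (ii)' `ρ P_δ = P_δ ρ = 0`,
(iii)' the kernel of `ρ` is contained in the range of `P_δ`, (iv)' `𝔉(ρ) = ρ`, and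
(v)' `ρ ⊗ 1 + 1 ⊗ ρ − 𝔐(ρ) ≥ 0`. -/
noncomputable def IsQuantumMetric (ρ : Matrix (ι × ι) (ι × ι) ℂ) : Prop :=
  ρ.PosSemidef ∧
  (ρ * Pdelta = 0 ∧ Pdelta * ρ = 0) ∧
  (∀ x : ι × ι → ℂ, ρ.mulVec x = 0 → x ∈ LinearMap.range (Pdelta (ι := ι)).mulVecLin) ∧
  flipOp ρ = ρ ∧
  (tensorOne ρ + oneTensor ρ - midUnit ρ).PosSemidef

/-! Condition (ii)' says that `ρ` is killed by the symmetrizer on both sides, so `ρ` lives on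
the antisymmetric tensors. For `n = 2` these form the line spanned by `a = e₀ ⊗ e₁ - e₁ ⊗ e₀`,
hence `ρ = μ |a⟩⟨a|` with `μ ≥ 0` by (i)'. Condition (iii)' rules out `μ = 0`, because `a` is
not symmetric. Finally the quadratic form of (v)' at `v_{(i,k,j)} = a_{(i,j)}` equals `-4μ < 0`. -/

omit [Fintype ι] in
theorem swapMatrix_apply_eq_ite (p q : ι × ι) :
    (swapMatrix : Matrix (ι × ι) (ι × ι) ℂ) p q = if p = q.swap then 1 else 0 := by
  simp only [swapMatrix, Prod.ext_iff, Prod.fst_swap, Prod.snd_swap]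

theorem mul_swapMatrix_apply (ρ : Matrix (ι × ι) (ι × ι) ℂ) (p q : ι × ι) :
    (ρ * swapMatrix : Matrix _ _ ℂ) p q = ρ p q.swap := by
  simp [mul_apply, swapMatrix_apply_eq_ite]

theorem swapMatrix_mul_apply (ρ : Matrix (ι × ι) (ι × ι) ℂ) (p q : ι × ι) :
    (swapMatrix * ρ : Matrix _ _ ℂ) p q = ρ p.swap q := by
  simp [mul_apply, swapMatrix_apply_eq_ite, ← Prod.swap_eq_iff_eq_swap]

theorem swapMatrix_mulVec_apply (x : ι × ι → ℂ) (p : ι × ι) :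
    (swapMatrix *ᵥ x) p = x p.swap := by
  simp [mulVec, dotProduct, swapMatrix_apply_eq_ite, ← Prod.swap_eq_iff_eq_swap]

theorem apply_swap_right_of_mul_Pdelta_eq_zero {ρ : Matrix (ι × ι) (ι × ι) ℂ}
    (h : ρ * Pdelta = 0) (p q : ι × ι) : ρ p q.swap = -ρ p q := by
  have hpq := congrFun (congrFun h p) q
  rw [Pdelta, mul_smul_comm, mul_add, mul_one, Matrix.smul_apply, Matrix.add_apply,
    mul_swapMatrix_apply, smul_eq_mul, Matrix.zero_apply] at hpq
  linear_combination 2 * hpq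

theorem apply_swap_left_of_Pdelta_mul_eq_zero {ρ : Matrix (ι × ι) (ι × ι) ℂ}
    (h : Pdelta * ρ = 0) (p q : ι × ι) : ρ p.swap q = -ρ p q := by
  have hpq := congrFun (congrFun h p) q
  rw [Pdelta, smul_mul_assoc, add_mul, one_mul, Matrix.smul_apply, Matrix.add_apply,
    swapMatrix_mul_apply, smul_eq_mul, Matrix.zero_apply] at hpq
  linear_combination 2 * hpq

theorem Pdelta_mulVec_apply_swap (x : ι × ι → ℂ) (p : ι × ι) :
    (Pdelta *ᵥ x) p.swap = (Pdelta *ᵥ x) p := by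
  simp only [Pdelta, smul_mulVec, add_mulVec, one_mulVec, Pi.smul_apply, Pi.add_apply,
    swapMatrix_mulVec_apply, Prod.swap_swap, add_comm]

theorem single_sub_single_swap_notMem_range_Pdelta {i j : ι} (hij : i ≠ j) :
    Pi.single (i, j) 1 - Pi.single (j, i) 1 ∉ LinearMap.range (Pdelta (ι := ι)).mulVecLin := by
  rintro ⟨y, hy⟩
  have h := Pdelta_mulVec_apply_swap y (i, j)
  rw [← mulVecLin_apply, hy] at h
  have h' : (-1 : ℂ) = 1 := by simpa [hij, hij.symm] using h
  norm_num at h'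

def antisymVec : Fin 2 × Fin 2 → ℂ := Pi.single (0, 1) 1 - Pi.single (1, 0) 1

theorem eq_smul_antisymVec {f : Fin 2 × Fin 2 → ℂ} (hf : ∀ p, f p.swap = -f p) :
    f = f (0, 1) • antisymVec := by
  have hdiag (i : Fin 2) : f (i, i) = 0 := by
    have h := hf (i, i)
    rw [Prod.swap_prod_mk] at h
    linear_combination h / 2
  have h10 : f (1, 0) = -f (0, 1) := hf (0, 1)
  ext ⟨i, j⟩
  fin_cases i <;> fin_cases j <;> simp [antisymVec, hdiag, h10]

theorem eq_smul_vecMulVec_antisymVec {ρ : Matrix (Fin 2 × Fin 2) (Fin 2 × Fin 2) ℂ}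
    (hr : ρ * Pdelta = 0) (hl : Pdelta * ρ = 0) :
    ρ = ρ (0, 1) (0, 1) • vecMulVec antisymVec antisymVec := by
  ext p q
  have hcol := congrFun (eq_smul_antisymVec (f := (ρ · q))
    (apply_swap_left_of_Pdelta_mul_eq_zero hl · q)) p
  have hrow := congrFun (eq_smul_antisymVec (apply_swap_right_of_mul_Pdelta_eq_zero hr (0, 1))) q
  simp only [Pi.smul_apply, smul_eq_mul] at hcol hrow
  rw [hcol, hrow, Matrix.smul_apply, vecMulVec_apply, smul_eq_mul]
  ring

def outerAntisymVec : Fin 2 × Fin 2 × Fin 2 → ℂ := fun p => antisymVec (p.1, p.2.2)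

theorem dotProduct_mulVec_outerAntisymVec (μ : ℂ) :
    let ρ := μ • vecMulVec antisymVec antisymVec
    star outerAntisymVec ⬝ᵥ ((tensorOne ρ + oneTensor ρ - midUnit ρ) *ᵥ outerAntisymVec)
      = -4 * μ := by
  simp only [dotProduct, mulVec, Fintype.sum_prod_type, Fin.sum_univ_two, Matrix.sub_apply,
    Matrix.add_apply, tensorOne, oneTensor, midUnit, Matrix.smul_apply, vecMulVec_apply,
    outerAntisymVec, antisymVec, Pi.star_apply, Pi.sub_apply, Pi.single_apply, Prod.mk.injEq,
    star_sub, smul_eq_mul, RCLike.star_def, MonoidWithZeroHom.map_ite_one_zero, zero_ne_one,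
    one_ne_zero, and_true, and_false, if_true, if_false]
  ring

/-- there is no quantum metric on the two-point noncommutative space
`qM₂(ℂ)`. -/
theorem stmt5 : ¬ ∃ ρ : Matrix (Fin 2 × Fin 2) (Fin 2 × Fin 2) ℂ, IsQuantumMetric ρ := by
  rintro ⟨ρ, hpsd, ⟨hr, hl⟩, hker, -, hT⟩
  obtain ⟨μ, rfl⟩ : ∃ μ, ρ = μ • vecMulVec antisymVec antisymVec :=
    ⟨_, eq_smul_vecMulVec_antisymVec hr hl⟩
  have hμ_nonneg : 0 ≤ μ := by
    simpa [antisymVec, vecMulVec] using hpsd.diag_nonneg (i := (0, 1))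
  have hμ_ne : μ ≠ 0 := by
    rintro rfl
    refine single_sub_single_swap_notMem_range_Pdelta (zero_ne_one' (Fin 2)) (hker _ ?_)
    rw [zero_smul, zero_mulVec]
  have hform := hT.dotProduct_mulVec_nonneg outerAntisymVec
  rw [dotProduct_mulVec_outerAntisymVec] at hform
  have h4μ : (0 : ℂ) < 4 * μ := mul_pos (by norm_num) (hμ_nonneg.lt_of_ne' hμ_ne)
  exact h4μ.not_ge (by simpa using hform)
end

section
/- Let n, m ≥ 1, let ρ₁ be a quantum metric on qMₙ(ℂ) and ρ₂ a quantum metric on qMₘ(ℂ), and let r be a real number with r > 0 and r ≥ (1/2)·max(‖ρ₁‖, ‖ρ₂‖), where ‖·‖ is the ℓ²-operator norm. Let I := Fin n ⊕ Fin m and define the matrix ρ indexed by I × I by: ρ_{(i,j),(k,l)} = (ρ₁)_{(i,j),(k,l)} if i,j,k,l all lie in Fin n; ρ_{(i,j),(k,l)} = (ρ₂)_{(i,j),(k,l)} if i,j,k,l all lie in Fin m; ρ_{(i,j),(k,l)} = r·δ_{ik} δ_{jl} if i,k ∈ Fin n and j,l ∈ Fin m, or if i,k ∈ Fin m and j,l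 ∈ Fin n; and ρ_{(i,j),(k,l)} = 0 otherwise. Let P_δ^⊕ be the matrix indexed by I × I that agrees with the symmetric projection P_δ,n on entries with all four indices in Fin n, agrees with P_δ,m on entries with all four indices in Fin m, and is 0 elsewhere. Then ρ satisfies: (i)' ρ is positive semidefinite; (ii)' ρ P_δ^⊕ = P_δ^⊕ ρ = 0; (iii)' every vector x ∈ ℂ^(I × I) with ρ x = 0 lies in the range of P_δ^⊕; (iv)' 𝔉(ρ) = ρ, where 𝔉(ρ)_{(i,j),(k,l)} = ρ_{(j,i),(l,k)}; (v)' ρ ⊗ 1 + 1 ⊗ ρ − 𝔐(ρ) is positive semidefinite, where for matrices indexed by I × I × I one sets 𝔐(ρ)_{(i,k,j),(i',k',j')} := δ_{kk'} ρ_{(i,j),(i',j')}, (ρ ⊗ 1)_{(i,j,k),(i',j',k')} := ρ_{(i,j),(i',j')} δ_{kk'}, (1 ⊗ ρ)_{(i,j,k),(i',j',k')} := δ_{ii'} ρ_{(j,k),(j',k')}. -/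
open Matrix
open scoped ComplexOrder

variable {ι : Type*} [Fintype ι] [DecidableEq ι]

variable {n m : ℕ}

/-- The direct-sum quantum metric of Theorem 3: `ρ = ρ₁ + ρ₂ + r·1_{A₁⊗A₂} + r·1_{A₂⊗A₁}`
realized as a matrix indexed by `(Fin n ⊕ Fin m) × (Fin n ⊕ Fin m)`. -/
def rhoSum (ρ₁ : Matrix (Fin n × Fin n) (Fin n × Fin n) ℂ)
    (ρ₂ : Matrix (Fin m × Fin m) (Fin m × Fin m) ℂ) (r : ℝ) :
    Matrix ((Fin n ⊕ Fin m) × (Fin n ⊕ Fin m)) ((Fin n ⊕ Fin m) × (Fin n ⊕ Fin m)) ℂ :=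
  fun p q =>
    match p, q with
    | (Sum.inl i, Sum.inl j), (Sum.inl k, Sum.inl l) => ρ₁ (i, j) (k, l)
    | (Sum.inr i, Sum.inr j), (Sum.inr k, Sum.inr l) => ρ₂ (i, j) (k, l)
    | (Sum.inl i, Sum.inr j), (Sum.inl k, Sum.inr l) =>
        (r : ℂ) * (if i = k then 1 else 0) * (if j = l then 1 else 0)
    | (Sum.inr i, Sum.inl j), (Sum.inr k, Sum.inl l) =>
        (r : ℂ) * (if i = k then 1 else 0) * (if j = l then 1 else 0)
    | _, _ => 0

/-- The direct-sum diagonal projection `P_δ^⊕`: it agrees with `P_δ,n` on entries with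
all four indices in `Fin n`, with `P_δ,m` on entries with all four indices in `Fin m`,
and is `0` elsewhere. -/
noncomputable def PdeltaSum (n m : ℕ) :
    Matrix ((Fin n ⊕ Fin m) × (Fin n ⊕ Fin m)) ((Fin n ⊕ Fin m) × (Fin n ⊕ Fin m)) ℂ :=
  fun p q =>
    match p, q with
    | (Sum.inl i, Sum.inl j), (Sum.inl k, Sum.inl l) => Pdelta (ι := Fin n) (i, j) (k, l)
    | (Sum.inr i, Sum.inr j), (Sum.inr k, Sum.inr l) => Pdelta (ι := Fin m) (i, j) (k, l)
    | _, _ => 0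

/-!
`ρ` is block diagonal for the four sectors `Fin a × Fin b` (`a, b ∈ {n, m}`) of
`(Fin n ⊕ Fin m)²`: it acts as `ρ₁` and `ρ₂` on the two pure sectors and as `r` on the two
mixed ones, so (i)'–(iv)' follow sector by sector, with `r ≠ 0` giving (iii)' on the mixed
sectors. Likewise `ρ ⊗ 1 + 1 ⊗ ρ − 𝔐(ρ)` is block diagonal for the eight sectors of
`(Fin n ⊕ Fin m)³`. On the pure sectors it is the corresponding matrix for `ρ₁` or `ρ₂`. On the
sectors `(n, n, m)` and `(m, n, n)` two of the three terms equal `r` and cancel, leaving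
`ρ₁ ⊗ 1`, resp. `1 ⊗ ρ₁`. On the sector `(n, m, n)` the first two terms equal `r` and the block is
`1 ⊗ (2r − ρ₁)`, which is positive because `‖ρ₁‖ ≤ 2r`. The same holds with `n` and `m` exchanged.
-/

open Sum
open scoped Kronecker

open scoped Matrix.Norms.L2Operator MatrixOrder in
theorem Matrix.IsHermitian.posSemidef_smul_one_sub {κ : Type*} [Fintype κ] [DecidableEq κ]
    {M : Matrix κ κ ℂ} (hM : M.IsHermitian) {c : ℝ} (hc : ‖toEuclideanCLM (𝕜 := ℂ) M‖ ≤ c) :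
    ((c : ℂ) • 1 - M).PosSemidef := by
  have hle : M ≤ algebraMap ℝ _ c :=
    (IsSelfAdjoint.le_algebraMap_norm_self hM).trans (algebraMap_mono _ hc)
  simpa [Matrix.le_iff, Algebra.algebraMap_eq_smul_one] using hle

section BlockExtend

variable {κ ι' : Type*} [Fintype κ] [Fintype ι'] [DecidableEq ι']

/-- For injective `g`, the matrix equal to `N` on the rows and columns in the range of `g` and
zero elsewhere. -/
def blockExtend (g : κ → ι') (N : Matrix κ κ ℂ) : Matrix ι' ι' ℂ :=
  let E : Matrix ι' κ ℂ := Matrix.of fun i a => if g a = i then 1 else 0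
  E * N * Eᴴ

theorem Matrix.PosSemidef.blockExtend (g : κ → ι') {N : Matrix κ κ ℂ} (hN : N.PosSemidef) :
    (blockExtend g N).PosSemidef :=
  hN.mul_mul_conjTranspose_same _

end BlockExtend

theorem funext_sum_prod_sum {α β γ : Type*} {x y : (α ⊕ β) × (α ⊕ β) → γ}
    (hll : x ∘ Prod.map inl inl = y ∘ Prod.map inl inl)
    (hlr : x ∘ Prod.map inl inr = y ∘ Prod.map inl inr)
    (hrl : x ∘ Prod.map inr inl = y ∘ Prod.map inr inl)
    (hrr : x ∘ Prod.map inr inr = y ∘ Prod.map inr inr) : x = y := by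
  funext p
  rcases p with ⟨i | i, j | j⟩
  exacts [congrFun hll (i, j), congrFun hlr (i, j), congrFun hrl (i, j), congrFun hrr (i, j)]

section RhoSum

variable {ρ₁ : Matrix (Fin n × Fin n) (Fin n × Fin n) ℂ}
  {ρ₂ : Matrix (Fin m × Fin m) (Fin m × Fin m) ℂ} {r : ℝ}

section MulVec

variable (ρ₁ ρ₂ r) (x : (Fin n ⊕ Fin m) × (Fin n ⊕ Fin m) → ℂ)

theorem rhoSum_mulVec_inl_inl :
    (rhoSum ρ₁ ρ₂ r *ᵥ x) ∘ Prod.map inl inl = ρ₁ *ᵥ (x ∘ Prod.map inl inl) := by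
  funext ⟨i, j⟩
  simp [mulVec, dotProduct, Fintype.sum_prod_type, Fintype.sum_sum_type, rhoSum]

theorem rhoSum_mulVec_inr_inr :
    (rhoSum ρ₁ ρ₂ r *ᵥ x) ∘ Prod.map inr inr = ρ₂ *ᵥ (x ∘ Prod.map inr inr) := by
  funext ⟨i, j⟩
  simp [mulVec, dotProduct, Fintype.sum_prod_type, Fintype.sum_sum_type, rhoSum]

theorem rhoSum_mulVec_inl_inr :
    (rhoSum ρ₁ ρ₂ r *ᵥ x) ∘ Prod.map inl inr = (r : ℂ) • (x ∘ Prod.map inl inr) := by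
  funext ⟨i, j⟩
  simp [mulVec, dotProduct, Fintype.sum_prod_type, Fintype.sum_sum_type, rhoSum]

theorem rhoSum_mulVec_inr_inl :
    (rhoSum ρ₁ ρ₂ r *ᵥ x) ∘ Prod.map inr inl = (r : ℂ) • (x ∘ Prod.map inr inl) := by
  funext ⟨i, j⟩
  simp [mulVec, dotProduct, Fintype.sum_prod_type, Fintype.sum_sum_type, rhoSum]

theorem PdeltaSum_mulVec_inl_inl :
    (PdeltaSum n m *ᵥ x) ∘ Prod.map inl inl = Pdelta *ᵥ (x ∘ Prod.map inl inl) := by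
  funext ⟨i, j⟩
  simp [mulVec, dotProduct, Fintype.sum_prod_type, Fintype.sum_sum_type, PdeltaSum]

theorem PdeltaSum_mulVec_inr_inr :
    (PdeltaSum n m *ᵥ x) ∘ Prod.map inr inr = Pdelta *ᵥ (x ∘ Prod.map inr inr) := by
  funext ⟨i, j⟩
  simp [mulVec, dotProduct, Fintype.sum_prod_type, Fintype.sum_sum_type, PdeltaSum]

theorem PdeltaSum_mulVec_inl_inr : (PdeltaSum n m *ᵥ x) ∘ Prod.map inl inr = 0 := by
  funext ⟨i, j⟩
  simp [mulVec, dotProduct, PdeltaSum]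

theorem PdeltaSum_mulVec_inr_inl : (PdeltaSum n m *ᵥ x) ∘ Prod.map inr inl = 0 := by
  funext ⟨i, j⟩
  simp [mulVec, dotProduct, PdeltaSum]

end MulVec

variable (ρ₁ ρ₂ r) in
theorem rhoSum_eq_blockExtend :
    rhoSum ρ₁ ρ₂ r =
      blockExtend (Prod.map inl inl) ρ₁ + blockExtend (Prod.map inr inr) ρ₂ +
        blockExtend (Prod.map inl inr) ((r : ℂ) • (1 : Matrix (Fin n × Fin m) _ ℂ)) +
        blockExtend (Prod.map inr inl) ((r : ℂ) • (1 : Matrix (Fin m × Fin n) _ ℂ)) := by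
  ext ⟨i | i, j | j⟩ ⟨k | k, l | l⟩ <;>
    simp [blockExtend, rhoSum, mul_apply, conjTranspose_apply, Fintype.sum_prod_type, Prod.ext_iff,
      ite_and, apply_ite (starRingEnd ℂ), mul_ite, ite_mul, mul_comm] <;>
    split_ifs <;> simp_all

theorem posSemidef_rhoSum (hρ₁ : ρ₁.PosSemidef) (hρ₂ : ρ₂.PosSemidef) (hr : 0 ≤ r) :
    (rhoSum ρ₁ ρ₂ r).PosSemidef := by
  have hr' : (0 : ℂ) ≤ r := Complex.zero_le_real.2 hr
  rw [rhoSum_eq_blockExtend]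
  exact ((((hρ₁.blockExtend _).add (hρ₂.blockExtend _)).add
    ((PosSemidef.one.smul hr').blockExtend _)).add ((PosSemidef.one.smul hr').blockExtend _))

theorem rhoSum_mul_PdeltaSum_eq_zero (h₁ : ρ₁ * Pdelta = 0) (h₂ : ρ₂ * Pdelta = 0) :
    rhoSum ρ₁ ρ₂ r * PdeltaSum n m = 0 := by
  refine ext_iff_mulVec.2 fun x => ?_
  rw [← mulVec_mulVec, zero_mulVec]
  apply funext_sum_prod_sum
  · rw [rhoSum_mulVec_inl_inl, PdeltaSum_mulVec_inl_inl, mulVec_mulVec,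
      h₁, zero_mulVec, Pi.zero_comp]
  · rw [rhoSum_mulVec_inl_inr, PdeltaSum_mulVec_inl_inr, smul_zero, Pi.zero_comp]
  · rw [rhoSum_mulVec_inr_inl, PdeltaSum_mulVec_inr_inl, smul_zero, Pi.zero_comp]
  · rw [rhoSum_mulVec_inr_inr, PdeltaSum_mulVec_inr_inr, mulVec_mulVec,
      h₂, zero_mulVec, Pi.zero_comp]

theorem PdeltaSum_mul_rhoSum_eq_zero (h₁ : Pdelta * ρ₁ = 0) (h₂ : Pdelta * ρ₂ = 0) :
    PdeltaSum n m * rhoSum ρ₁ ρ₂ r = 0 := by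
  refine ext_iff_mulVec.2 fun x => ?_
  rw [← mulVec_mulVec, zero_mulVec]
  apply funext_sum_prod_sum
  · rw [PdeltaSum_mulVec_inl_inl, rhoSum_mulVec_inl_inl, mulVec_mulVec,
      h₁, zero_mulVec, Pi.zero_comp]
  · rw [PdeltaSum_mulVec_inl_inr, Pi.zero_comp]
  · rw [PdeltaSum_mulVec_inr_inl, Pi.zero_comp]
  · rw [PdeltaSum_mulVec_inr_inr, rhoSum_mulVec_inr_inr, mulVec_mulVec,
      h₂, zero_mulVec, Pi.zero_comp]

theorem mem_range_PdeltaSum_of_rhoSum_mulVec_eq_zero (hr : r ≠ 0)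
    (h₁ : ∀ y, ρ₁ *ᵥ y = 0 → y ∈ LinearMap.range (Pdelta (ι := Fin n)).mulVecLin)
    (h₂ : ∀ y, ρ₂ *ᵥ y = 0 → y ∈ LinearMap.range (Pdelta (ι := Fin m)).mulVecLin)
    {x : (Fin n ⊕ Fin m) × (Fin n ⊕ Fin m) → ℂ} (hx : rhoSum ρ₁ ρ₂ r *ᵥ x = 0) :
    x ∈ LinearMap.range (PdeltaSum n m).mulVecLin := by
  obtain ⟨y₁, hy₁⟩ := h₁ _ (by rw [← rhoSum_mulVec_inl_inl, hx]; rfl)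
  obtain ⟨y₂, hy₂⟩ := h₂ _ (by rw [← rhoSum_mulVec_inr_inr, hx]; rfl)
  have hlr : x ∘ Prod.map inl inr = 0 := by
    simpa [hx, hr] using (rhoSum_mulVec_inl_inr ρ₁ ρ₂ r x).symm
  have hrl : x ∘ Prod.map inr inl = 0 := by
    simpa [hx, hr] using (rhoSum_mulVec_inr_inl ρ₁ ρ₂ r x).symm
  let y : (Fin n ⊕ Fin m) × (Fin n ⊕ Fin m) → ℂ := fun p =>
    match p with
    | (inl i, inl j) => y₁ (i, j)
    | (inr i, inr j) => y₂ (i, j)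
    | _ => 0
  refine ⟨y, funext_sum_prod_sum ?_ ?_ ?_ ?_⟩
  · exact (PdeltaSum_mulVec_inl_inl y).trans hy₁
  · rw [mulVecLin_apply, PdeltaSum_mulVec_inl_inr, hlr]
  · rw [mulVecLin_apply, PdeltaSum_mulVec_inr_inl, hrl]
  · exact (PdeltaSum_mulVec_inr_inr y).trans hy₂

theorem flipOp_rhoSum (h₁ : flipOp ρ₁ = ρ₁) (h₂ : flipOp ρ₂ = ρ₂) :
    flipOp (rhoSum ρ₁ ρ₂ r) = rhoSum ρ₁ ρ₂ r := by
  ext ⟨i | i, j | j⟩ ⟨k | k, l | l⟩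
  all_goals
    first
      | exact congrFun (congrFun h₁ (i, j)) (k, l)
      | exact congrFun (congrFun h₂ (i, j)) (k, l)
      | (simp only [flipOp, rhoSum] <;> ring)

set_option maxHeartbeats 1000000 in
variable (ρ₁ ρ₂ r) in
theorem tensorOne_add_oneTensor_sub_midUnit_rhoSum :
    tensorOne (rhoSum ρ₁ ρ₂ r) + oneTensor (rhoSum ρ₁ ρ₂ r) - midUnit (rhoSum ρ₁ ρ₂ r) =
      blockExtend (fun a : Fin n × Fin n × Fin n => (inl a.1, inl a.2.1, inl a.2.2))
          (tensorOne ρ₁ + oneTensor ρ₁ - midUnit ρ₁) +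
        blockExtend (fun a : Fin m × Fin m × Fin m => (inr a.1, inr a.2.1, inr a.2.2))
          (tensorOne ρ₂ + oneTensor ρ₂ - midUnit ρ₂) +
        blockExtend (fun a : (Fin n × Fin n) × Fin m => (inl a.1.1, inl a.1.2, inr a.2))
          (ρ₁ ⊗ₖ (1 : Matrix (Fin m) (Fin m) ℂ)) +
        blockExtend (fun a : (Fin m × Fin m) × Fin n => (inr a.1.1, inr a.1.2, inl a.2))
          (ρ₂ ⊗ₖ (1 : Matrix (Fin n) (Fin n) ℂ)) +
        blockExtend (fun a : Fin m × Fin n × Fin n => (inr a.1, inl a.2.1, inl a.2.2))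
          ((1 : Matrix (Fin m) (Fin m) ℂ) ⊗ₖ ρ₁) +
        blockExtend (fun a : Fin n × Fin m × Fin m => (inl a.1, inr a.2.1, inr a.2.2))
          ((1 : Matrix (Fin n) (Fin n) ℂ) ⊗ₖ ρ₂) +
        blockExtend (fun a : Fin m × Fin n × Fin n => (inl a.2.1, inr a.1, inl a.2.2))
          ((1 : Matrix (Fin m) (Fin m) ℂ) ⊗ₖ (((2 * r : ℝ) : ℂ) • 1 - ρ₁)) +
        blockExtend (fun a : Fin n × Fin m × Fin m => (inr a.2.1, inl a.1, inr a.2.2))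
          ((1 : Matrix (Fin n) (Fin n) ℂ) ⊗ₖ (((2 * r : ℝ) : ℂ) • 1 - ρ₂)) := by
  ext ⟨i | i, j | j, k | k⟩ ⟨i' | i', j' | j', k' | k'⟩ <;>
    simp [blockExtend, rhoSum, tensorOne, oneTensor, midUnit, mul_apply, conjTranspose_apply,
      Fintype.sum_prod_type, one_apply, Prod.ext_iff, ite_and, kroneckerMap_apply,
      apply_ite (starRingEnd ℂ), mul_ite, ite_mul] <;>
    split_ifs <;> simp_all [two_mul]

theorem posSemidef_tensorOne_add_oneTensor_sub_midUnit_rhoSum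
    (hT₁ : (tensorOne ρ₁ + oneTensor ρ₁ - midUnit ρ₁).PosSemidef)
    (hT₂ : (tensorOne ρ₂ + oneTensor ρ₂ - midUnit ρ₂).PosSemidef)
    (hρ₁ : ρ₁.PosSemidef) (hρ₂ : ρ₂.PosSemidef)
    (hr₁ : (((2 * r : ℝ) : ℂ) • 1 - ρ₁).PosSemidef)
    (hr₂ : (((2 * r : ℝ) : ℂ) • 1 - ρ₂).PosSemidef) :
    (tensorOne (rhoSum ρ₁ ρ₂ r) + oneTensor (rhoSum ρ₁ ρ₂ r) -
      midUnit (rhoSum ρ₁ ρ₂ r)).PosSemidef := by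
  rw [tensorOne_add_oneTensor_sub_midUnit_rhoSum]
  exact (((((((hT₁.blockExtend _).add (hT₂.blockExtend _)).add
    ((hρ₁.kronecker .one).blockExtend _)).add ((hρ₂.kronecker .one).blockExtend _)).add
    ((PosSemidef.one.kronecker hρ₁).blockExtend _)).add
    ((PosSemidef.one.kronecker hρ₂).blockExtend _)).add
    ((PosSemidef.one.kronecker hr₁).blockExtend _)).add
    ((PosSemidef.one.kronecker hr₂).blockExtend _)

end RhoSum

theorem stmt7_general
    (ρ₁ : Matrix (Fin n × Fin n) (Fin n × Fin n) ℂ)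
    (ρ₂ : Matrix (Fin m × Fin m) (Fin m × Fin m) ℂ)
    (h₁ : IsQuantumMetric ρ₁) (h₂ : IsQuantumMetric ρ₂)
    (r : ℝ) (hr_pos : 0 < r)
    (hr : 2⁻¹ * max ‖toEuclideanCLM (𝕜 := ℂ) ρ₁‖ ‖toEuclideanCLM (𝕜 := ℂ) ρ₂‖ ≤ r) :
    (rhoSum ρ₁ ρ₂ r).PosSemidef ∧
    (rhoSum ρ₁ ρ₂ r * PdeltaSum n m = 0 ∧ PdeltaSum n m * rhoSum ρ₁ ρ₂ r = 0) ∧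
    (∀ x : (Fin n ⊕ Fin m) × (Fin n ⊕ Fin m) → ℂ, (rhoSum ρ₁ ρ₂ r).mulVec x = 0 →
      x ∈ LinearMap.range (PdeltaSum n m).mulVecLin) ∧
    flipOp (rhoSum ρ₁ ρ₂ r) = rhoSum ρ₁ ρ₂ r ∧
    (tensorOne (rhoSum ρ₁ ρ₂ r) + oneTensor (rhoSum ρ₁ ρ₂ r) -
        midUnit (rhoSum ρ₁ ρ₂ r)).PosSemidef := by
  obtain ⟨hρ₁, ⟨hρP₁, hPρ₁⟩, hker₁, hflip₁, hT₁⟩ := h₁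
  obtain ⟨hρ₂, ⟨hρP₂, hPρ₂⟩, hker₂, hflip₂, hT₂⟩ := h₂
  obtain ⟨hnorm₁, hnorm₂⟩ :
      ‖toEuclideanCLM (𝕜 := ℂ) ρ₁‖ ≤ 2 * r ∧ ‖toEuclideanCLM (𝕜 := ℂ) ρ₂‖ ≤ 2 * r :=
    max_le_iff.1 (by linarith)
  exact ⟨posSemidef_rhoSum hρ₁ hρ₂ hr_pos.le,
    ⟨rhoSum_mul_PdeltaSum_eq_zero hρP₁ hρP₂, PdeltaSum_mul_rhoSum_eq_zero hPρ₁ hPρ₂⟩,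
    fun _ => mem_range_PdeltaSum_of_rhoSum_mulVec_eq_zero hr_pos.ne' hker₁ hker₂,
    flipOp_rhoSum hflip₁ hflip₂,
    posSemidef_tensorOne_add_oneTensor_sub_midUnit_rhoSum hT₁ hT₂ hρ₁ hρ₂
      (hρ₁.1.posSemidef_smul_one_sub hnorm₁) (hρ₂.1.posSemidef_smul_one_sub hnorm₂)⟩

/-- Theorem 3 of the paper for `A₁ = Mₙ(ℂ)`, `A₂ = Mₘ(ℂ)`: if `ρ₁`, `ρ₂`
are quantum metrics and `r > 0` with `r ≥ 2⁻¹ max(‖ρ₁‖, ‖ρ₂‖)` (ℓ²-operator norms),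
then the direct-sum matrix `ρ` satisfies (i)'-(v)' with respect to `P_δ^⊕`. -/
theorem stmt7 (hn : 1 ≤ n) (hm : 1 ≤ m)
    (ρ₁ : Matrix (Fin n × Fin n) (Fin n × Fin n) ℂ)
    (ρ₂ : Matrix (Fin m × Fin m) (Fin m × Fin m) ℂ)
    (h₁ : IsQuantumMetric ρ₁) (h₂ : IsQuantumMetric ρ₂)
    (r : ℝ) (hr_pos : 0 < r)
    (hr : 2⁻¹ * max ‖toEuclideanCLM (𝕜 := ℂ) ρ₁‖ ‖toEuclideanCLM (𝕜 := ℂ) ρ₂‖ ≤ r) :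
    (rhoSum ρ₁ ρ₂ r).PosSemidef ∧
    (rhoSum ρ₁ ρ₂ r * PdeltaSum n m = 0 ∧ PdeltaSum n m * rhoSum ρ₁ ρ₂ r = 0) ∧
    (∀ x : (Fin n ⊕ Fin m) × (Fin n ⊕ Fin m) → ℂ, (rhoSum ρ₁ ρ₂ r).mulVec x = 0 →
      x ∈ LinearMap.range (PdeltaSum n m).mulVecLin) ∧
    flipOp (rhoSum ρ₁ ρ₂ r) = rhoSum ρ₁ ρ₂ r ∧
    (tensorOne (rhoSum ρ₁ ρ₂ r) + oneTensor (rhoSum ρ₁ ρ₂ r) -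
        midUnit (rhoSum ρ₁ ρ₂ r)).PosSemidef :=
  stmt7_general ρ₁ ρ₂ h₁ h₂ r hr_pos hr
end

section
/- Let n, m ≥ 1, let ρ₁ be an algebraic quantum metric on qMₙ(ℂ) and ρ₂ an algebraic quantum metric on qMₘ(ℂ), and let r be a real number with r > 0 and r ≥ (1/2)·max(‖ρ₁‖, ‖ρ₂‖) (ℓ²-operator norms). Let I := Fin n ⊕ Fin m and define ρ indexed by I × I by: ρ = ρ₁ on entries with all four indices in Fin n, ρ = ρ₂ on entries with all four indices in Fin m, ρ_{(i,j),(k,l)} = r·δ_{ik} δ_{jl} when (i,k ∈ Fin n and j,l ∈ Fin m) or (i,k ∈ Fin m and j,l ∈ Fin n), and ρ = 0 on the remaining entries. Then ρ is an algebraic quantum metric on q(Mₙ(ℂ) ⊕ Mₘ(ℂ)); in particular: ρ is positive semidefinite; m(ρ) = 0, where m(x)_{i,j} := Σ_k x_{(i,k),(k,j)} (sum over k ∈ I); for every positive semidefinite matrix ν indexed by I × I that is block-supported (ν_{(i,j),(k,l)} = 0 unless i,k lie in the same summand of I and j,l lie in the same summand of I) with m(ν) equal to the identity matrix and 𝔉(ν)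 = ν, the matrix ρ + ν is invertible; 𝔉(ρ) = ρ; and ρ ⊗ 1 + 1 ⊗ ρ − 𝔐(ρ) is positive semidefinite (𝔉, 𝔐, ρ⊗1, 1⊗ρ defined entrywise as below). -/
open Matrix
open scoped ComplexOrder

variable {ι : Type*} [Fintype ι] [DecidableEq ι]

/-- The multiplication map `m : Mₖ(ℂ) ⊗ Mₖ(ℂ) → Mₖ(ℂ)`, `m(a ⊗ b) = ab`:
`m(x)_{i,j} = Σ_t x_{(i,t),(t,j)}`. -/
noncomputable def mulMap (x : Matrix (ι × ι) (ι × ι) ℂ) : Matrix ι ι ℂ :=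
  fun i j => ∑ t : ι, x (i, t) (t, j)

/-- An algebraic quantum metric on `qMₖ(ℂ)`: a matrix `ρ ∈ Mₖ(ℂ) ⊗ Mₖ(ℂ)` satisfying
(i)' positivity, (ii)'' `m(ρ) = 0`, (iii)'' for every positive semidefinite `ν` with
`m(ν) = 1` and `𝔉(ν) = ν` the matrix `ρ + ν` is invertible, (iv)' `𝔉(ρ) = ρ`, and
(v)' `ρ ⊗ 1 + 1 ⊗ ρ − 𝔐(ρ) ≥ 0`. -/
def IsAlgQuantumMetric (ρ : Matrix (ι × ι) (ι × ι) ℂ) : Prop :=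
  ρ.PosSemidef ∧
  mulMap ρ = 0 ∧
  (∀ ν : Matrix (ι × ι) (ι × ι) ℂ, ν.PosSemidef → mulMap ν = 1 → flipOp ν = ν →
    IsUnit (ρ + ν)) ∧
  flipOp ρ = ρ ∧
  (tensorOne ρ + oneTensor ρ - midUnit ρ).PosSemidef

namespace Stmt9Aux

variable {K A : Type*} [Fintype K] [Fintype A]

lemma sum_of_range {e : A → K} (he : Function.Injective e) (g : K → ℂ)
    (hg : ∀ p, (∀ a, e a ≠ p) → g p = 0) : ∑ p, g p = ∑ a, g (e a) := by
  classical
  rw [← Finset.sum_image (g := e) (f := g) (fun a _ b _ h => he h)]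
  symm
  apply Finset.sum_subset (Finset.subset_univ _)
  intro p _ hp
  exact hg p fun a hap => hp (Finset.mem_image.mpr ⟨a, Finset.mem_univ _, hap⟩)

lemma quad_eq (M : Matrix K K ℂ) (N : Matrix A A ℂ) (e : A → K) (he : Function.Injective e)
    (hMe : ∀ a b, M (e a) (e b) = N a b)
    (x : K → ℂ) (hx : ∀ p, (∀ a, e a ≠ p) → x p = 0) :
    star x ⬝ᵥ M *ᵥ x = star (x ∘ e) ⬝ᵥ N *ᵥ (x ∘ e) := by
  simp only [dotProduct, mulVec, Pi.star_apply, Function.comp]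
  rw [sum_of_range he _ (fun p hp => by rw [hx p hp, star_zero, zero_mul])]
  refine Finset.sum_congr rfl fun a _ => ?_
  congr 1
  rw [sum_of_range he _ (fun p hp => by rw [hx p hp, mul_zero])]
  exact Finset.sum_congr rfl fun b _ => by rw [hMe]

lemma quad_nonneg (M : Matrix K K ℂ) (N : Matrix A A ℂ) (hN : N.PosSemidef)
    (e : A → K) (he : Function.Injective e)
    (hMe : ∀ a b, M (e a) (e b) = N a b)
    (x : K → ℂ) (hx : ∀ p, (∀ a, e a ≠ p) → x p = 0) :
    0 ≤ star x ⬝ᵥ M *ᵥ x := by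
  rw [quad_eq M N e he hMe x hx]
  exact hN.dotProduct_mulVec_nonneg _

lemma posSemidef_of_classes {C : Type*} [Fintype C] [DecidableEq C]
    (M : Matrix K K ℂ) (c : K → C) (hH : M.IsHermitian)
    (h0 : ∀ p q, c p ≠ c q → M p q = 0)
    (hQ : ∀ γ (x : K → ℂ), (∀ p, c p ≠ γ → x p = 0) → 0 ≤ star x ⬝ᵥ M *ᵥ x) :
    M.PosSemidef := by
  classical
  refine Matrix.PosSemidef.of_dotProduct_mulVec_nonneg hH fun x => ?_
  set f : C → K → K → ℂ := fun γ p q =>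
    (if c p = γ then star (x p) else 0) * (M p q * (if c q = γ then x q else 0)) with hf
  have mid : ∀ p q, star (x p) * (M p q * x q) = ∑ γ : C, f γ p q := by
    intro p q
    by_cases hpq : c p = c q
    · rw [Finset.sum_eq_single (c p)]
      · simp [hf, hpq]
      · intro γ _ hγ
        simp [hf, Ne.symm hγ]
      · exact fun h => absurd (Finset.mem_univ _) h
    · rw [h0 p q hpq]
      simp [hf, hpq]
  have key : star x ⬝ᵥ M *ᵥ x
      = ∑ γ : C, star (fun p => if c p = γ then x p else 0) ⬝ᵥ
          M *ᵥ (fun p => if c p = γ then x p else 0) := by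
    calc star x ⬝ᵥ M *ᵥ x = ∑ p, ∑ q, star (x p) * (M p q * x q) := by
          simp [dotProduct, mulVec, Finset.mul_sum]
      _ = ∑ p, ∑ q, ∑ γ : C, f γ p q :=
          Finset.sum_congr rfl fun p _ => Finset.sum_congr rfl fun q _ => mid p q
      _ = ∑ p, ∑ γ : C, ∑ q, f γ p q :=
          Finset.sum_congr rfl fun p _ => Finset.sum_comm
      _ = ∑ γ : C, ∑ p, ∑ q, f γ p q := Finset.sum_comm
      _ = _ := by
          refine Finset.sum_congr rfl fun γ _ => ?_
          simp [hf, dotProduct, mulVec, Finset.mul_sum, apply_ite (star : ℂ → ℂ)]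
  rw [key]
  exact Finset.sum_nonneg fun γ _ => hQ γ _ (fun p hp => by simp [hp])

lemma psd_deltaMul {B : Type*} [Fintype B] [DecidableEq B]
    (N : Matrix A A ℂ) (hN : N.PosSemidef) :
    Matrix.PosSemidef (Matrix.of fun (p q : A × B) => N p.1 q.1 * (if p.2 = q.2 then 1 else 0)) := by
  classical
  rw [Matrix.posSemidef_iff_dotProduct_mulVec]
  constructor
  · ext p q
    simp only [Matrix.conjTranspose_apply, Matrix.of_apply, star_mul', apply_ite (star : ℂ → ℂ),
      star_one, star_zero]
    rw [hN.1.apply]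
    congr 1
    by_cases h : p.2 = q.2
    · simp [h]
    · simp [h, Ne.symm h]
  · intro x
    have key : star x ⬝ᵥ (Matrix.of fun (p q : A × B) => N p.1 q.1 * (if p.2 = q.2 then 1 else 0)) *ᵥ x
        = ∑ b : B, star (fun a => x (a, b)) ⬝ᵥ N *ᵥ (fun a => x (a, b)) := by
      simp only [dotProduct, mulVec, Pi.star_apply, Matrix.of_apply, Fintype.sum_prod_type,
        mul_ite, mul_one, mul_zero, ite_mul, zero_mul, Finset.mul_sum, Finset.sum_ite_eq,
        Finset.mem_univ, if_true]
      rw [Finset.sum_comm]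
    rw [key]
    exact Finset.sum_nonneg fun b _ => hN.dotProduct_mulVec_nonneg _

lemma psd_mulDelta {B : Type*} [Fintype B] [DecidableEq B]
    (N : Matrix A A ℂ) (hN : N.PosSemidef) :
    Matrix.PosSemidef (Matrix.of fun (p q : B × A) => (if p.1 = q.1 then 1 else 0) * N p.2 q.2) := by
  classical
  rw [Matrix.posSemidef_iff_dotProduct_mulVec]
  constructor
  · ext p q
    simp only [Matrix.conjTranspose_apply, Matrix.of_apply, star_mul', apply_ite (star : ℂ → ℂ),
      star_one, star_zero]
    rw [hN.1.apply]
    rw [mul_comm (if q.1 = p.1 then (1:ℂ) else 0), mul_comm (if p.1 = q.1 then (1:ℂ) else 0)]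
    congr 1
    by_cases h : p.1 = q.1
    · simp [h]
    · simp [h, Ne.symm h]
  · intro x
    have key : star x ⬝ᵥ (Matrix.of fun (p q : B × A) => (if p.1 = q.1 then 1 else 0) * N p.2 q.2) *ᵥ x
        = ∑ b : B, star (fun a => x (b, a)) ⬝ᵥ N *ᵥ (fun a => x (b, a)) := by
      simp only [dotProduct, mulVec, Pi.star_apply, Matrix.of_apply, Fintype.sum_prod_type,
        mul_ite, mul_one, mul_zero, ite_mul, zero_mul, Finset.mul_sum, Finset.sum_ite_eq,
        Finset.mem_univ, if_true]
      refine Finset.sum_congr rfl fun b _ => Finset.sum_congr rfl fun a _ => ?_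
      rw [Finset.sum_comm]
      simp [Finset.sum_ite_eq, mul_assoc]
    rw [key]
    exact Finset.sum_nonneg fun b _ => hN.dotProduct_mulVec_nonneg _

lemma psd_smul_one [DecidableEq A] {r : ℝ} (hr : 0 ≤ r) :
    ((r : ℂ) • (1 : Matrix A A ℂ)).PosSemidef := by
  rw [Matrix.posSemidef_iff_dotProduct_mulVec]
  constructor
  · ext p q
    simp only [Matrix.conjTranspose_apply, Matrix.smul_apply, Matrix.one_apply, star_smul,
      apply_ite (star : ℂ → ℂ), star_one, star_zero, Complex.star_def, Complex.conj_ofReal,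
      smul_eq_mul]
    by_cases h : p = q
    · simp [h]
    · simp [h, Ne.symm h]
  · intro x
    simp only [Matrix.smul_mulVec, Matrix.one_mulVec, dotProduct_smul, smul_eq_mul]
    refine mul_nonneg (by exact_mod_cast Complex.zero_le_real.mpr hr) ?_
    simp only [dotProduct, Pi.star_apply]
    exact Finset.sum_nonneg fun p _ => star_mul_self_nonneg _

lemma psd_smul_one_sub [DecidableEq A] (M : Matrix A A ℂ) (hM : M.IsHermitian) (c : ℝ)
    (hc : ‖toEuclideanCLM (𝕜 := ℂ) M‖ ≤ c) :
    ((c : ℂ) • 1 - M).PosSemidef := by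
  rw [Matrix.posSemidef_iff_dotProduct_mulVec]
  constructor
  · have h1 : ((c : ℂ) • (1 : Matrix A A ℂ)).IsHermitian := by
      ext p q
      simp only [Matrix.conjTranspose_apply, Matrix.smul_apply, Matrix.one_apply, smul_eq_mul,
        star_mul', apply_ite (star : ℂ → ℂ), star_one, star_zero, Complex.star_def,
        Complex.conj_ofReal]
      by_cases h : p = q
      · simp [h]
      · simp [h, Ne.symm h]
    exact h1.sub hM
  · intro x
    set y : EuclideanSpace ℂ A := (WithLp.equiv 2 (A → ℂ)).symm x with hy
    set T := toEuclideanCLM (𝕜 := ℂ) M with hT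
    have hz : star x ⬝ᵥ M *ᵥ x = inner ℂ y (T y) := by
      rw [hT, hy]
      rw [WithLp.equiv_symm_apply, Matrix.toEuclideanCLM_toLp, EuclideanSpace.inner_toLp_toLp,
        dotProduct_comm]
    have hs : star x ⬝ᵥ x = (‖y‖ ^ 2 : ℝ) := by
      have := inner_self_eq_norm_sq_to_K (𝕜 := ℂ) y
      rw [hy, WithLp.equiv_symm_apply, EuclideanSpace.inner_toLp_toLp, dotProduct_comm] at this
      exact_mod_cast this
    have hre : (star x ⬝ᵥ M *ᵥ x).re ≤ c * ‖y‖ ^ 2 := by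
      rw [hz]
      calc (inner ℂ y (T y) : ℂ).re ≤ ‖(inner ℂ y (T y) : ℂ)‖ := Complex.re_le_norm _
        _ ≤ ‖y‖ * ‖T y‖ := norm_inner_le_norm _ _
        _ ≤ ‖y‖ * (‖T‖ * ‖y‖) := by
            refine mul_le_mul_of_nonneg_left (T.le_opNorm y) (norm_nonneg _)
        _ ≤ ‖y‖ * (c * ‖y‖) := by
            refine mul_le_mul_of_nonneg_left (mul_le_mul_of_nonneg_right hc (norm_nonneg _))
              (norm_nonneg _)
        _ = c * ‖y‖ ^ 2 := by ring
    have him : (star x ⬝ᵥ M *ᵥ x).im = 0 := by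
      have hsym := Matrix.isHermitian_iff_isSymmetric.mp hM
      have hTy : T y = Matrix.toEuclideanLin M y := rfl
      have hconj : (starRingEnd ℂ) (inner ℂ y (T y) : ℂ) = inner ℂ y (T y) := by
        rw [inner_conj_symm, hTy]
        exact hsym y y
      rw [hz]
      have h2 := congrArg Complex.im hconj
      simp only [Complex.conj_im] at h2
      linarith
    rw [Matrix.sub_mulVec, dotProduct_sub, Matrix.smul_mulVec, Matrix.one_mulVec,
      dotProduct_smul, hs]
    rw [Complex.nonneg_iff]
    constructor
    · simp only [Complex.sub_re, Complex.smul_re, Complex.mul_re, Complex.ofReal_re,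
        Complex.ofReal_im, smul_eq_mul, mul_zero, zero_mul, sub_zero]
      linarith [hre]
    · simp only [Complex.sub_im, Complex.smul_im, Complex.mul_im, Complex.ofReal_re,
        Complex.ofReal_im, smul_eq_mul, mul_zero, zero_mul, add_zero, zero_add, him, sub_zero]

lemma ite_eq_comm {α : Type*} [DecidableEq α] (a b : α) :
    (if a = b then (1 : ℂ) else 0) = (if b = a then 1 else 0) := by
  by_cases h : a = b
  · simp [h]
  · simp [h, Ne.symm h]

lemma star_r_delta {α β : Type*} [DecidableEq α] [DecidableEq β] (r : ℝ) (i k : α) (j l : β) :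
    star ((r : ℂ) * (if k = i then 1 else 0) * (if l = j then 1 else 0))
      = (r : ℂ) * (if i = k then 1 else 0) * (if j = l then 1 else 0) := by
  rw [ite_eq_comm i k, ite_eq_comm j l]
  simp only [star_mul', Complex.star_def, Complex.conj_ofReal, apply_ite (starRingEnd ℂ),
    _root_.map_one, _root_.map_zero]

end Stmt9Aux

variable {n m : ℕ}

/-- A matrix indexed by `(Fin n ⊕ Fin m) × (Fin n ⊕ Fin m)` is block-supported (i.e. lies
in `(Mₙ(ℂ) ⊕ Mₘ(ℂ)) ⊗ (Mₙ(ℂ) ⊕ Mₘ(ℂ))`) if `ν_{(i,j),(k,l)} = 0` unless `i, k` lie in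
the same summand and `j, l` lie in the same summand. -/
def BlockSupported
    (ν : Matrix ((Fin n ⊕ Fin m) × (Fin n ⊕ Fin m)) ((Fin n ⊕ Fin m) × (Fin n ⊕ Fin m)) ℂ) :
    Prop :=
  ∀ p q : (Fin n ⊕ Fin m) × (Fin n ⊕ Fin m),
    ¬(p.1.isLeft = q.1.isLeft ∧ p.2.isLeft = q.2.isLeft) → ν p q = 0

set_option maxHeartbeats 1000000 in
private lemma rho_blk {n m : ℕ} (ρ₁ : Matrix (Fin n × Fin n) (Fin n × Fin n) ℂ)
    (ρ₂ : Matrix (Fin m × Fin m) (Fin m × Fin m) ℂ) (r : ℝ) : BlockSupported (rhoSum ρ₁ ρ₂ r) := by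
    rintro ⟨i|i, j|j⟩ ⟨k|k, l|l⟩ h <;> simp_all [rhoSum]

set_option maxHeartbeats 1000000 in
private lemma rho_herm {n m : ℕ} (ρ₁ : Matrix (Fin n × Fin n) (Fin n × Fin n) ℂ)
    (ρ₂ : Matrix (Fin m × Fin m) (Fin m × Fin m) ℂ) (r : ℝ) (h₁herm : ρ₁.IsHermitian) (h₂herm : ρ₂.IsHermitian) :
    (rhoSum ρ₁ ρ₂ r).IsHermitian := by
    ext p q
    rcases p with ⟨i|i, j|j⟩ <;> rcases q with ⟨k|k, l|l⟩ <;>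
      simp only [conjTranspose_apply] <;>
      first
        | exact h₁herm.apply _ _
        | exact h₂herm.apply _ _
        | exact Stmt9Aux.star_r_delta r _ _ _ _
        | simp [rhoSum]

set_option maxHeartbeats 1000000 in
private lemma rho_psd {n m : ℕ} (ρ₁ : Matrix (Fin n × Fin n) (Fin n × Fin n) ℂ)
    (ρ₂ : Matrix (Fin m × Fin m) (Fin m × Fin m) ℂ) (r : ℝ) (h₁psd : ρ₁.PosSemidef) (h₂psd : ρ₂.PosSemidef) (hrr : 0 ≤ r) :
    (rhoSum ρ₁ ρ₂ r).PosSemidef := by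
  have hblk := rho_blk ρ₁ ρ₂ r
  have hherm := rho_herm ρ₁ ρ₂ r h₁psd.1 h₂psd.1
  refine Stmt9Aux.posSemidef_of_classes _ (fun p => (p.1.isLeft, p.2.isLeft)) hherm ?_ ?_
  · intro p q hne
    refine hblk p q (fun h => hne ?_)
    show (p.1.isLeft, p.2.isLeft) = (q.1.isLeft, q.2.isLeft)
    rw [h.1, h.2]
  · rintro ⟨(_|_), (_|_)⟩ x hx
    · refine Stmt9Aux.quad_nonneg _ ρ₂ h₂psd (fun a => (Sum.inr a.1, Sum.inr a.2)) ?_ ?_ x ?_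
      · rintro ⟨a1, a2⟩ ⟨b1, b2⟩ h; simp_all
      · rintro ⟨a1, a2⟩ ⟨b1, b2⟩; rfl
      · rintro ⟨i|i, j|j⟩ hp
        · apply hx; simp
        · apply hx; simp
        · apply hx; simp
        · exact absurd rfl (hp (i, j))
    · refine Stmt9Aux.quad_nonneg _ ((r : ℂ) • (1 : Matrix (Fin m × Fin n) (Fin m × Fin n) ℂ))
        (Stmt9Aux.psd_smul_one hrr) (fun a => (Sum.inr a.1, Sum.inl a.2)) ?_ ?_ x ?_
      · rintro ⟨a1, a2⟩ ⟨b1, b2⟩ h; simp_all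
      · rintro ⟨a1, a2⟩ ⟨b1, b2⟩
        by_cases h1 : a1 = b1 <;> by_cases h2 : a2 = b2 <;>
          simp [rhoSum, Matrix.smul_apply, Matrix.one_apply, Prod.ext_iff, h1, h2, smul_eq_mul]
      · rintro ⟨i|i, j|j⟩ hp
        · apply hx; simp
        · apply hx; simp
        · exact absurd rfl (hp (i, j))
        · apply hx; simp
    · refine Stmt9Aux.quad_nonneg _ ((r : ℂ) • (1 : Matrix (Fin n × Fin m) (Fin n × Fin m) ℂ))
        (Stmt9Aux.psd_smul_one hrr) (fun a => (Sum.inl a.1, Sum.inr a.2)) ?_ ?_ x ?_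
      · rintro ⟨a1, a2⟩ ⟨b1, b2⟩ h; simp_all
      · rintro ⟨a1, a2⟩ ⟨b1, b2⟩
        by_cases h1 : a1 = b1 <;> by_cases h2 : a2 = b2 <;>
          simp [rhoSum, Matrix.smul_apply, Matrix.one_apply, Prod.ext_iff, h1, h2, smul_eq_mul]
      · rintro ⟨i|i, j|j⟩ hp
        · apply hx; simp
        · exact absurd rfl (hp (i, j))
        · apply hx; simp
        · apply hx; simp
    · refine Stmt9Aux.quad_nonneg _ ρ₁ h₁psd (fun a => (Sum.inl a.1, Sum.inl a.2)) ?_ ?_ x ?_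
      · rintro ⟨a1, a2⟩ ⟨b1, b2⟩ h; simp_all
      · rintro ⟨a1, a2⟩ ⟨b1, b2⟩; rfl
      · rintro ⟨i|i, j|j⟩ hp
        · exact absurd rfl (hp (i, j))
        · apply hx; simp
        · apply hx; simp
        · apply hx; simp

set_option maxHeartbeats 1000000 in
private lemma rho_mul {n m : ℕ} (ρ₁ : Matrix (Fin n × Fin n) (Fin n × Fin n) ℂ)
    (ρ₂ : Matrix (Fin m × Fin m) (Fin m × Fin m) ℂ) (r : ℝ) (h₁mul : mulMap ρ₁ = 0) (h₂mul : mulMap ρ₂ = 0) :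
    mulMap (rhoSum ρ₁ ρ₂ r) = 0 := by
    ext i j
    rcases i with i|i <;> rcases j with j|j
    · have h0 := congrFun (congrFun h₁mul i) j
      simp only [mulMap, Matrix.zero_apply] at h0 ⊢
      rw [Fintype.sum_sum_type]
      simp [rhoSum, h0]
    · simp only [mulMap, Matrix.zero_apply]
      rw [Fintype.sum_sum_type]
      simp [rhoSum]
    · simp only [mulMap, Matrix.zero_apply]
      rw [Fintype.sum_sum_type]
      simp [rhoSum]
    · have h0 := congrFun (congrFun h₂mul i) j
      simp only [mulMap, Matrix.zero_apply] at h0 ⊢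
      rw [Fintype.sum_sum_type]
      simp [rhoSum, h0]

set_option maxHeartbeats 1000000 in
private lemma rho_flip {n m : ℕ} (ρ₁ : Matrix (Fin n × Fin n) (Fin n × Fin n) ℂ)
    (ρ₂ : Matrix (Fin m × Fin m) (Fin m × Fin m) ℂ) (r : ℝ) (h₁flip : flipOp ρ₁ = ρ₁) (h₂flip : flipOp ρ₂ = ρ₂) :
    flipOp (rhoSum ρ₁ ρ₂ r) = rhoSum ρ₁ ρ₂ r := by
    ext p q
    rcases p with ⟨i|i, j|j⟩ <;> rcases q with ⟨k|k, l|l⟩ <;>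
      simp only [flipOp] <;>
      first
        | exact congrFun (congrFun h₁flip (i, j)) (k, l)
        | exact congrFun (congrFun h₂flip (i, j)) (k, l)
        | (simp only [rhoSum]; ring)
        | simp [rhoSum]

set_option maxHeartbeats 2000000 in
private lemma rho_inv {n m : ℕ} (ρ₁ : Matrix (Fin n × Fin n) (Fin n × Fin n) ℂ)
    (ρ₂ : Matrix (Fin m × Fin m) (Fin m × Fin m) ℂ) (r : ℝ) (h₁psd : ρ₁.PosSemidef) (h₂psd : ρ₂.PosSemidef) (hr_pos : 0 < r)
    (h₁inv : ∀ ν : Matrix (Fin n × Fin n) (Fin n × Fin n) ℂ, ν.PosSemidef → mulMap ν = 1 →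
      flipOp ν = ν → IsUnit (ρ₁ + ν))
    (h₂inv : ∀ ν : Matrix (Fin m × Fin m) (Fin m × Fin m) ℂ, ν.PosSemidef → mulMap ν = 1 →
      flipOp ν = ν → IsUnit (ρ₂ + ν)) :
    ∀ ν : Matrix ((Fin n ⊕ Fin m) × (Fin n ⊕ Fin m)) ((Fin n ⊕ Fin m) × (Fin n ⊕ Fin m)) ℂ,
      ν.PosSemidef → BlockSupported ν → mulMap ν = 1 → flipOp ν = ν →
      IsUnit (rhoSum ρ₁ ρ₂ r + ν) := by
  have hblk := rho_blk ρ₁ ρ₂ r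
  have hPSD := rho_psd ρ₁ ρ₂ r h₁psd h₂psd hr_pos.le
  intro ν hν hblkν hm1 hflip
  rw [Matrix.isUnit_iff_isUnit_det]
  refine isUnit_iff_ne_zero.mpr fun hdet => ?_
  obtain ⟨v, hv0, hMv⟩ := Matrix.exists_mulVec_eq_zero_iff.mpr hdet
  have hq := congrArg (fun w => star v ⬝ᵥ w) hMv
  simp only [Matrix.add_mulVec, dotProduct_add, dotProduct_zero] at hq
  have hqρ : star v ⬝ᵥ rhoSum ρ₁ ρ₂ r *ᵥ v = 0 := by
    have hle : star v ⬝ᵥ rhoSum ρ₁ ρ₂ r *ᵥ v ≤ 0 := by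
      rw [eq_neg_of_add_eq_zero_left hq]
      exact neg_nonpos_of_nonneg (hν.dotProduct_mulVec_nonneg v)
    exact le_antisymm hle (hPSD.dotProduct_mulVec_nonneg v)
  have hqν : star v ⬝ᵥ ν *ᵥ v = 0 := by rwa [hqρ, zero_add] at hq
  have hρv : rhoSum ρ₁ ρ₂ r *ᵥ v = 0 := (hPSD.dotProduct_mulVec_zero_iff v).mp hqρ
  have hνv : ν *ᵥ v = 0 := (hν.dotProduct_mulVec_zero_iff v).mp hqν
  have hinjL : Function.Injective
      (fun b : Fin n × Fin n => ((Sum.inl b.1 : Fin n ⊕ Fin m), (Sum.inl b.2 : Fin n ⊕ Fin m))) := by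
    rintro ⟨b1, b2⟩ ⟨c1, c2⟩ h; simp_all
  have hinjR : Function.Injective
      (fun b : Fin m × Fin m => ((Sum.inr b.1 : Fin n ⊕ Fin m), (Sum.inr b.2 : Fin n ⊕ Fin m))) := by
    rintro ⟨b1, b2⟩ ⟨c1, c2⟩ h; simp_all
  have hLR : ∀ (i : Fin n) (j : Fin m), v (Sum.inl i, Sum.inr j) = 0 := by
    intro i j
    have h := congrFun hρv (Sum.inl i, Sum.inr j)
    rw [show (rhoSum ρ₁ ρ₂ r *ᵥ v) (Sum.inl i, Sum.inr j)
        = ∑ q, rhoSum ρ₁ ρ₂ r (Sum.inl i, Sum.inr j) q * v q from rfl] at h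
    rw [Finset.sum_eq_single (Sum.inl i, Sum.inr j)] at h
    · simp only [rhoSum, eq_self_iff_true, if_true, mul_one, Pi.zero_apply] at h
      rcases mul_eq_zero.mp h with h' | h'
      · exact absurd (Complex.ofReal_eq_zero.mp h') hr_pos.ne'
      · exact h'
    · rintro ⟨k|k, l|l⟩ - hb
      · simp [rhoSum]
      · by_cases hik : i = k
        · by_cases hjl : j = l
          · subst hik; subst hjl; exact absurd rfl hb
          · simp [rhoSum, hjl]
        · simp [rhoSum, hik]
      · simp [rhoSum]
      · simp [rhoSum]
    · exact fun hmem => absurd (Finset.mem_univ _) hmem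
  have hRL : ∀ (i : Fin m) (j : Fin n), v (Sum.inr i, Sum.inl j) = 0 := by
    intro i j
    have h := congrFun hρv (Sum.inr i, Sum.inl j)
    rw [show (rhoSum ρ₁ ρ₂ r *ᵥ v) (Sum.inr i, Sum.inl j)
        = ∑ q, rhoSum ρ₁ ρ₂ r (Sum.inr i, Sum.inl j) q * v q from rfl] at h
    rw [Finset.sum_eq_single (Sum.inr i, Sum.inl j)] at h
    · simp only [rhoSum, eq_self_iff_true, if_true, mul_one, Pi.zero_apply] at h
      rcases mul_eq_zero.mp h with h' | h'
      · exact absurd (Complex.ofReal_eq_zero.mp h') hr_pos.ne'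
      · exact h'
    · rintro ⟨k|k, l|l⟩ - hb
      · simp [rhoSum]
      · simp [rhoSum]
      · by_cases hik : i = k
        · by_cases hjl : j = l
          · subst hik; subst hjl; exact absurd rfl hb
          · simp [rhoSum, hjl]
        · simp [rhoSum, hik]
      · simp [rhoSum]
    · exact fun hmem => absurd (Finset.mem_univ _) hmem
  have hρ₁vL : ρ₁ *ᵥ (fun a : Fin n × Fin n => v (Sum.inl a.1, Sum.inl a.2)) = 0 := by
    funext a
    have h := congrFun hρv (Sum.inl a.1, Sum.inl a.2)
    rw [show (rhoSum ρ₁ ρ₂ r *ᵥ v) (Sum.inl a.1, Sum.inl a.2)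
        = ∑ q, rhoSum ρ₁ ρ₂ r (Sum.inl a.1, Sum.inl a.2) q * v q from rfl] at h
    have hsupp : ∀ p, (∀ b : Fin n × Fin n,
        ((Sum.inl b.1 : Fin n ⊕ Fin m), (Sum.inl b.2 : Fin n ⊕ Fin m)) ≠ p) →
        rhoSum ρ₁ ρ₂ r (Sum.inl a.1, Sum.inl a.2) p * v p = 0 := by
      rintro ⟨k|k, l|l⟩ hqr
      · exact absurd rfl (hqr (k, l))
      · rw [hblk _ _ (by simp), zero_mul]
      · rw [hblk _ _ (by simp), zero_mul]
      · rw [hblk _ _ (by simp), zero_mul]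
    rw [Stmt9Aux.sum_of_range hinjL _ hsupp] at h
    exact h
  have hρ₂vR : ρ₂ *ᵥ (fun a : Fin m × Fin m => v (Sum.inr a.1, Sum.inr a.2)) = 0 := by
    funext a
    have h := congrFun hρv (Sum.inr a.1, Sum.inr a.2)
    rw [show (rhoSum ρ₁ ρ₂ r *ᵥ v) (Sum.inr a.1, Sum.inr a.2)
        = ∑ q, rhoSum ρ₁ ρ₂ r (Sum.inr a.1, Sum.inr a.2) q * v q from rfl] at h
    have hsupp : ∀ p, (∀ b : Fin m × Fin m,
        ((Sum.inr b.1 : Fin n ⊕ Fin m), (Sum.inr b.2 : Fin n ⊕ Fin m)) ≠ p) →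
        rhoSum ρ₁ ρ₂ r (Sum.inr a.1, Sum.inr a.2) p * v p = 0 := by
      rintro ⟨k|k, l|l⟩ hqr
      · rw [hblk _ _ (by simp), zero_mul]
      · rw [hblk _ _ (by simp), zero_mul]
      · rw [hblk _ _ (by simp), zero_mul]
      · exact absurd rfl (hqr (k, l))
    rw [Stmt9Aux.sum_of_range hinjR _ hsupp] at h
    exact h
  have hνLL : (ν.submatrix (fun b : Fin n × Fin n => ((Sum.inl b.1 : Fin n ⊕ Fin m), (Sum.inl b.2 : Fin n ⊕ Fin m)))
      (fun b : Fin n × Fin n => ((Sum.inl b.1 : Fin n ⊕ Fin m), (Sum.inl b.2 : Fin n ⊕ Fin m)))).PosSemidef :=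
    hν.submatrix _
  have hνRR : (ν.submatrix (fun b : Fin m × Fin m => ((Sum.inr b.1 : Fin n ⊕ Fin m), (Sum.inr b.2 : Fin n ⊕ Fin m)))
      (fun b : Fin m × Fin m => ((Sum.inr b.1 : Fin n ⊕ Fin m), (Sum.inr b.2 : Fin n ⊕ Fin m)))).PosSemidef :=
    hν.submatrix _
  have hmLL : mulMap (ν.submatrix (fun b : Fin n × Fin n => ((Sum.inl b.1 : Fin n ⊕ Fin m), (Sum.inl b.2 : Fin n ⊕ Fin m)))
      (fun b : Fin n × Fin n => ((Sum.inl b.1 : Fin n ⊕ Fin m), (Sum.inl b.2 : Fin n ⊕ Fin m)))) = 1 := by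
    ext i j
    have h := congrFun (congrFun hm1 (Sum.inl i)) (Sum.inl j)
    simp only [mulMap, Matrix.one_apply] at h ⊢
    rw [Fintype.sum_sum_type] at h
    rw [Finset.sum_eq_zero
      (fun t _ => hblkν (Sum.inl i, Sum.inr t) (Sum.inr t, Sum.inl j) (by simp)), add_zero] at h
    simp only [Sum.inl.injEq] at h
    simpa [Matrix.submatrix_apply] using h
  have hmRR : mulMap (ν.submatrix (fun b : Fin m × Fin m => ((Sum.inr b.1 : Fin n ⊕ Fin m), (Sum.inr b.2 : Fin n ⊕ Fin m)))
      (fun b : Fin m × Fin m => ((Sum.inr b.1 : Fin n ⊕ Fin m), (Sum.inr b.2 : Fin n ⊕ Fin m)))) = 1 := by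
    ext i j
    have h := congrFun (congrFun hm1 (Sum.inr i)) (Sum.inr j)
    simp only [mulMap, Matrix.one_apply] at h ⊢
    rw [Fintype.sum_sum_type] at h
    rw [Finset.sum_eq_zero
      (fun t _ => hblkν (Sum.inr i, Sum.inl t) (Sum.inl t, Sum.inr j) (by simp)), zero_add] at h
    simp only [Sum.inr.injEq] at h
    simpa [Matrix.submatrix_apply] using h
  have hfLL : flipOp (ν.submatrix (fun b : Fin n × Fin n => ((Sum.inl b.1 : Fin n ⊕ Fin m), (Sum.inl b.2 : Fin n ⊕ Fin m)))
      (fun b : Fin n × Fin n => ((Sum.inl b.1 : Fin n ⊕ Fin m), (Sum.inl b.2 : Fin n ⊕ Fin m))))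
      = ν.submatrix (fun b : Fin n × Fin n => ((Sum.inl b.1 : Fin n ⊕ Fin m), (Sum.inl b.2 : Fin n ⊕ Fin m)))
        (fun b : Fin n × Fin n => ((Sum.inl b.1 : Fin n ⊕ Fin m), (Sum.inl b.2 : Fin n ⊕ Fin m))) := by
    ext p q
    exact congrFun (congrFun hflip (Sum.inl p.1, Sum.inl p.2)) (Sum.inl q.1, Sum.inl q.2)
  have hfRR : flipOp (ν.submatrix (fun b : Fin m × Fin m => ((Sum.inr b.1 : Fin n ⊕ Fin m), (Sum.inr b.2 : Fin n ⊕ Fin m)))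
      (fun b : Fin m × Fin m => ((Sum.inr b.1 : Fin n ⊕ Fin m), (Sum.inr b.2 : Fin n ⊕ Fin m))))
      = ν.submatrix (fun b : Fin m × Fin m => ((Sum.inr b.1 : Fin n ⊕ Fin m), (Sum.inr b.2 : Fin n ⊕ Fin m)))
        (fun b : Fin m × Fin m => ((Sum.inr b.1 : Fin n ⊕ Fin m), (Sum.inr b.2 : Fin n ⊕ Fin m))) := by
    ext p q
    exact congrFun (congrFun hflip (Sum.inr p.1, Sum.inr p.2)) (Sum.inr q.1, Sum.inr q.2)
  have hνvL : (ν.submatrix (fun b : Fin n × Fin n => ((Sum.inl b.1 : Fin n ⊕ Fin m), (Sum.inl b.2 : Fin n ⊕ Fin m)))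
      (fun b : Fin n × Fin n => ((Sum.inl b.1 : Fin n ⊕ Fin m), (Sum.inl b.2 : Fin n ⊕ Fin m))))
      *ᵥ (fun a : Fin n × Fin n => v (Sum.inl a.1, Sum.inl a.2)) = 0 := by
    funext a
    have h := congrFun hνv (Sum.inl a.1, Sum.inl a.2)
    rw [show (ν *ᵥ v) (Sum.inl a.1, Sum.inl a.2)
        = ∑ q, ν (Sum.inl a.1, Sum.inl a.2) q * v q from rfl] at h
    have hsupp : ∀ p, (∀ b : Fin n × Fin n,
        ((Sum.inl b.1 : Fin n ⊕ Fin m), (Sum.inl b.2 : Fin n ⊕ Fin m)) ≠ p) →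
        ν (Sum.inl a.1, Sum.inl a.2) p * v p = 0 := by
      rintro ⟨k|k, l|l⟩ hqr
      · exact absurd rfl (hqr (k, l))
      · rw [hblkν _ _ (by simp), zero_mul]
      · rw [hblkν _ _ (by simp), zero_mul]
      · rw [hblkν _ _ (by simp), zero_mul]
    rw [Stmt9Aux.sum_of_range hinjL _ hsupp] at h
    exact h
  have hνvR : (ν.submatrix (fun b : Fin m × Fin m => ((Sum.inr b.1 : Fin n ⊕ Fin m), (Sum.inr b.2 : Fin n ⊕ Fin m)))
      (fun b : Fin m × Fin m => ((Sum.inr b.1 : Fin n ⊕ Fin m), (Sum.inr b.2 : Fin n ⊕ Fin m))))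
      *ᵥ (fun a : Fin m × Fin m => v (Sum.inr a.1, Sum.inr a.2)) = 0 := by
    funext a
    have h := congrFun hνv (Sum.inr a.1, Sum.inr a.2)
    rw [show (ν *ᵥ v) (Sum.inr a.1, Sum.inr a.2)
        = ∑ q, ν (Sum.inr a.1, Sum.inr a.2) q * v q from rfl] at h
    have hsupp : ∀ p, (∀ b : Fin m × Fin m,
        ((Sum.inr b.1 : Fin n ⊕ Fin m), (Sum.inr b.2 : Fin n ⊕ Fin m)) ≠ p) →
        ν (Sum.inr a.1, Sum.inr a.2) p * v p = 0 := by
      rintro ⟨k|k, l|l⟩ hqr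
      · rw [hblkν _ _ (by simp), zero_mul]
      · rw [hblkν _ _ (by simp), zero_mul]
      · rw [hblkν _ _ (by simp), zero_mul]
      · exact absurd rfl (hqr (k, l))
    rw [Stmt9Aux.sum_of_range hinjR _ hsupp] at h
    exact h
  have hvL : (fun a : Fin n × Fin n => v (Sum.inl a.1, Sum.inl a.2)) = 0 := by
    apply Matrix.mulVec_injective_iff_isUnit.mpr (h₁inv _ hνLL hmLL hfLL)
    rw [Matrix.add_mulVec, hρ₁vL, hνvL, Matrix.mulVec_zero]
    simp
  have hvR : (fun a : Fin m × Fin m => v (Sum.inr a.1, Sum.inr a.2)) = 0 := by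
    apply Matrix.mulVec_injective_iff_isUnit.mpr (h₂inv _ hνRR hmRR hfRR)
    rw [Matrix.add_mulVec, hρ₂vR, hνvR, Matrix.mulVec_zero]
    simp
  apply hv0
  funext p
  rcases p with ⟨i|i, j|j⟩
  · exact congrFun hvL (i, j)
  · exact hLR i j
  · exact hRL i j
  · exact congrFun hvR (i, j)

set_option maxHeartbeats 4000000 in
set_option synthInstance.maxHeartbeats 1000000 in
private lemma rho_five {n m : ℕ} (ρ₁ : Matrix (Fin n × Fin n) (Fin n × Fin n) ℂ)
    (ρ₂ : Matrix (Fin m × Fin m) (Fin m × Fin m) ℂ) (r : ℝ) (h₁psd : ρ₁.PosSemidef) (h₂psd : ρ₂.PosSemidef)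
    (h₁five : (tensorOne ρ₁ + oneTensor ρ₁ - midUnit ρ₁).PosSemidef)
    (h₂five : (tensorOne ρ₂ + oneTensor ρ₂ - midUnit ρ₂).PosSemidef)
    (hbound₁ : ‖toEuclideanCLM (𝕜 := ℂ) ρ₁‖ ≤ 2 * r)
    (hbound₂ : ‖toEuclideanCLM (𝕜 := ℂ) ρ₂‖ ≤ 2 * r) :
    (tensorOne (rhoSum ρ₁ ρ₂ r) + oneTensor (rhoSum ρ₁ ρ₂ r) -
        midUnit (rhoSum ρ₁ ρ₂ r)).PosSemidef := by
  have hherm := rho_herm ρ₁ ρ₂ r h₁psd.1 h₂psd.1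
  have hH : ∀ p q, star ((rhoSum ρ₁ ρ₂ r) q p) = (rhoSum ρ₁ ρ₂ r) p q :=
    fun p q => hherm.apply p q
  have hThm : (tensorOne (rhoSum ρ₁ ρ₂ r) + oneTensor (rhoSum ρ₁ ρ₂ r)
      - midUnit (rhoSum ρ₁ ρ₂ r)).IsHermitian := by
    ext p q
    simp only [Matrix.conjTranspose_apply, Matrix.sub_apply, Matrix.add_apply, tensorOne,
      oneTensor, midUnit, star_sub, star_add, star_mul', apply_ite (star : ℂ → ℂ), star_one,
      star_zero, hH]
    rw [Stmt9Aux.ite_eq_comm q.2.2 p.2.2, Stmt9Aux.ite_eq_comm q.1 p.1,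
      Stmt9Aux.ite_eq_comm q.2.1 p.2.1]
  refine Stmt9Aux.posSemidef_of_classes _
    (fun p => (p.1.isLeft, p.2.1.isLeft, p.2.2.isLeft)) hThm ?_ ?_
  · rintro ⟨i|i, t|t, j|j⟩ ⟨i'|i', t'|t', j'|j'⟩ hne <;>
      first
        | exact absurd rfl hne
        | simp [tensorOne, oneTensor, midUnit, rhoSum, Matrix.add_apply, Matrix.sub_apply]
  · rintro ⟨(_|_), (_|_), (_|_)⟩ x hx
    · -- (R,R,R)
      refine Stmt9Aux.quad_nonneg _ (tensorOne ρ₂ + oneTensor ρ₂ - midUnit ρ₂) h₂five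
        (fun a => (Sum.inr a.1, Sum.inr a.2.1, Sum.inr a.2.2)) ?_ ?_ x ?_
      · rintro ⟨a1, a2, a3⟩ ⟨b1, b2, b3⟩ h; simp_all
      · rintro ⟨a1, a2, a3⟩ ⟨b1, b2, b3⟩
        simp [tensorOne, oneTensor, midUnit, rhoSum, Matrix.add_apply, Matrix.sub_apply]
      · rintro ⟨i|i, t|t, j|j⟩ hp <;>
          first
            | exact absurd rfl (hp (i, t, j))
            | (apply hx; simp)
    · -- (R,R,L)
      refine Stmt9Aux.quad_nonneg _
        (Matrix.of fun p q : (Fin m × Fin m) × Fin n => ρ₂ p.1 q.1 * (if p.2 = q.2 then 1 else 0))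
        (Stmt9Aux.psd_deltaMul ρ₂ h₂psd)
        (fun a => (Sum.inr a.1.1, Sum.inr a.1.2, Sum.inl a.2)) ?_ ?_ x ?_
      · rintro ⟨⟨a1, a2⟩, a3⟩ ⟨⟨b1, b2⟩, b3⟩ h; simp_all
      · rintro ⟨⟨a1, a2⟩, a3⟩ ⟨⟨b1, b2⟩, b3⟩
        by_cases h1 : a1 = b1 <;> by_cases h2 : a2 = b2 <;> by_cases h3 : a3 = b3 <;>
          simp [tensorOne, oneTensor, midUnit, rhoSum, Matrix.of_apply, Matrix.add_apply,
            Matrix.sub_apply, h1, h2, h3] <;> push_cast <;> ring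
      · rintro ⟨i|i, t|t, j|j⟩ hp <;>
          first
            | exact absurd rfl (hp ((i, t), j))
            | (apply hx; simp)
    · -- (R,L,R)
      refine Stmt9Aux.quad_nonneg _
        (Matrix.of fun p q : (Fin m × Fin m) × Fin n =>
          ((((2 * r : ℝ) : ℂ) • 1 - ρ₂) p.1 q.1) * (if p.2 = q.2 then 1 else 0))
        (Stmt9Aux.psd_deltaMul _ (Stmt9Aux.psd_smul_one_sub ρ₂ h₂psd.1 (2 * r) hbound₂))
        (fun a => (Sum.inr a.1.1, Sum.inl a.2, Sum.inr a.1.2)) ?_ ?_ x ?_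
      · rintro ⟨⟨a1, a2⟩, a3⟩ ⟨⟨b1, b2⟩, b3⟩ h; simp_all
      · rintro ⟨⟨a1, a2⟩, a3⟩ ⟨⟨b1, b2⟩, b3⟩
        by_cases h1 : a1 = b1 <;> by_cases h2 : a2 = b2 <;> by_cases h3 : a3 = b3 <;>
          simp [tensorOne, oneTensor, midUnit, rhoSum, Matrix.of_apply, Matrix.add_apply,
            Matrix.sub_apply, Matrix.smul_apply, Matrix.one_apply, Prod.ext_iff, smul_eq_mul,
            h1, h2, h3] <;> push_cast <;> ring
      · rintro ⟨i|i, t|t, j|j⟩ hp <;>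
          first
            | exact absurd rfl (hp ((i, j), t))
            | (apply hx; simp)
    · -- (R,L,L)
      refine Stmt9Aux.quad_nonneg _
        (Matrix.of fun p q : Fin m × (Fin n × Fin n) => (if p.1 = q.1 then 1 else 0) * ρ₁ p.2 q.2)
        (Stmt9Aux.psd_mulDelta ρ₁ h₁psd)
        (fun a => (Sum.inr a.1, Sum.inl a.2.1, Sum.inl a.2.2)) ?_ ?_ x ?_
      · rintro ⟨a1, a2, a3⟩ ⟨b1, b2, b3⟩ h; simp_all
      · rintro ⟨a1, a2, a3⟩ ⟨b1, b2, b3⟩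
        by_cases h1 : a1 = b1 <;> by_cases h2 : a2 = b2 <;> by_cases h3 : a3 = b3 <;>
          simp [tensorOne, oneTensor, midUnit, rhoSum, Matrix.of_apply, Matrix.add_apply,
            Matrix.sub_apply, h1, h2, h3] <;> push_cast <;> ring
      · rintro ⟨i|i, t|t, j|j⟩ hp <;>
          first
            | exact absurd rfl (hp (i, t, j))
            | (apply hx; simp)
    · -- (L,R,R)
      refine Stmt9Aux.quad_nonneg _
        (Matrix.of fun p q : Fin n × (Fin m × Fin m) => (if p.1 = q.1 then 1 else 0) * ρ₂ p.2 q.2)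
        (Stmt9Aux.psd_mulDelta ρ₂ h₂psd)
        (fun a => (Sum.inl a.1, Sum.inr a.2.1, Sum.inr a.2.2)) ?_ ?_ x ?_
      · rintro ⟨a1, a2, a3⟩ ⟨b1, b2, b3⟩ h; simp_all
      · rintro ⟨a1, a2, a3⟩ ⟨b1, b2, b3⟩
        by_cases h1 : a1 = b1 <;> by_cases h2 : a2 = b2 <;> by_cases h3 : a3 = b3 <;>
          simp [tensorOne, oneTensor, midUnit, rhoSum, Matrix.of_apply, Matrix.add_apply,
            Matrix.sub_apply, h1, h2, h3] <;> push_cast <;> ring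
      · rintro ⟨i|i, t|t, j|j⟩ hp <;>
          first
            | exact absurd rfl (hp (i, t, j))
            | (apply hx; simp)
    · -- (L,R,L)
      refine Stmt9Aux.quad_nonneg _
        (Matrix.of fun p q : (Fin n × Fin n) × Fin m =>
          ((((2 * r : ℝ) : ℂ) • 1 - ρ₁) p.1 q.1) * (if p.2 = q.2 then 1 else 0))
        (Stmt9Aux.psd_deltaMul _ (Stmt9Aux.psd_smul_one_sub ρ₁ h₁psd.1 (2 * r) hbound₁))
        (fun a => (Sum.inl a.1.1, Sum.inr a.2, Sum.inl a.1.2)) ?_ ?_ x ?_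
      · rintro ⟨⟨a1, a2⟩, a3⟩ ⟨⟨b1, b2⟩, b3⟩ h; simp_all
      · rintro ⟨⟨a1, a2⟩, a3⟩ ⟨⟨b1, b2⟩, b3⟩
        by_cases h1 : a1 = b1 <;> by_cases h2 : a2 = b2 <;> by_cases h3 : a3 = b3 <;>
          simp [tensorOne, oneTensor, midUnit, rhoSum, Matrix.of_apply, Matrix.add_apply,
            Matrix.sub_apply, Matrix.smul_apply, Matrix.one_apply, Prod.ext_iff, smul_eq_mul,
            h1, h2, h3] <;> push_cast <;> ring
      · rintro ⟨i|i, t|t, j|j⟩ hp <;>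
          first
            | exact absurd rfl (hp ((i, j), t))
            | (apply hx; simp)
    · -- (L,L,R)
      refine Stmt9Aux.quad_nonneg _
        (Matrix.of fun p q : (Fin n × Fin n) × Fin m => ρ₁ p.1 q.1 * (if p.2 = q.2 then 1 else 0))
        (Stmt9Aux.psd_deltaMul ρ₁ h₁psd)
        (fun a => (Sum.inl a.1.1, Sum.inl a.1.2, Sum.inr a.2)) ?_ ?_ x ?_
      · rintro ⟨⟨a1, a2⟩, a3⟩ ⟨⟨b1, b2⟩, b3⟩ h; simp_all
      · rintro ⟨⟨a1, a2⟩, a3⟩ ⟨⟨b1, b2⟩, b3⟩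
        by_cases h1 : a1 = b1 <;> by_cases h2 : a2 = b2 <;> by_cases h3 : a3 = b3 <;>
          simp [tensorOne, oneTensor, midUnit, rhoSum, Matrix.of_apply, Matrix.add_apply,
            Matrix.sub_apply, h1, h2, h3] <;> push_cast <;> ring
      · rintro ⟨i|i, t|t, j|j⟩ hp <;>
          first
            | exact absurd rfl (hp ((i, t), j))
            | (apply hx; simp)
    · -- (L,L,L)
      refine Stmt9Aux.quad_nonneg _ (tensorOne ρ₁ + oneTensor ρ₁ - midUnit ρ₁) h₁five
        (fun a => (Sum.inl a.1, Sum.inl a.2.1, Sum.inl a.2.2)) ?_ ?_ x ?_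
      · rintro ⟨a1, a2, a3⟩ ⟨b1, b2, b3⟩ h; simp_all
      · rintro ⟨a1, a2, a3⟩ ⟨b1, b2, b3⟩
        simp [tensorOne, oneTensor, midUnit, rhoSum, Matrix.add_apply, Matrix.sub_apply]
      · rintro ⟨i|i, t|t, j|j⟩ hp <;>
          first
            | exact absurd rfl (hp (i, t, j))
            | (apply hx; simp)

set_option maxHeartbeats 1000000 in
set_option synthInstance.maxHeartbeats 1000000 in
/-- Theorem 6 of the paper for `A₁ = Mₙ(ℂ)`, `A₂ = Mₘ(ℂ)`: if `ρ₁`, `ρ₂`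
are algebraic quantum metrics and `r > 0` with `r ≥ 2⁻¹ max(‖ρ₁‖, ‖ρ₂‖)` (ℓ²-operator
norms), then the direct-sum element `ρ` is an algebraic quantum metric on
`q(Mₙ(ℂ) ⊕ Mₘ(ℂ))`. -/
theorem stmt9 (hn : 1 ≤ n) (hm : 1 ≤ m)
    (ρ₁ : Matrix (Fin n × Fin n) (Fin n × Fin n) ℂ)
    (ρ₂ : Matrix (Fin m × Fin m) (Fin m × Fin m) ℂ)
    (h₁ : IsAlgQuantumMetric ρ₁) (h₂ : IsAlgQuantumMetric ρ₂)
    (r : ℝ) (hr_pos : 0 < r)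
    (hr : 2⁻¹ * max ‖toEuclideanCLM (𝕜 := ℂ) ρ₁‖ ‖toEuclideanCLM (𝕜 := ℂ) ρ₂‖ ≤ r) :
    (rhoSum ρ₁ ρ₂ r).PosSemidef ∧
    mulMap (rhoSum ρ₁ ρ₂ r) = 0 ∧
    (∀ ν : Matrix ((Fin n ⊕ Fin m) × (Fin n ⊕ Fin m)) ((Fin n ⊕ Fin m) × (Fin n ⊕ Fin m)) ℂ,
      ν.PosSemidef → BlockSupported ν → mulMap ν = 1 → flipOp ν = ν →
      IsUnit (rhoSum ρ₁ ρ₂ r + ν)) ∧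
    flipOp (rhoSum ρ₁ ρ₂ r) = rhoSum ρ₁ ρ₂ r ∧
    (tensorOne (rhoSum ρ₁ ρ₂ r) + oneTensor (rhoSum ρ₁ ρ₂ r) -
        midUnit (rhoSum ρ₁ ρ₂ r)).PosSemidef := by
  obtain ⟨h₁psd, h₁mul, h₁inv, h₁flip, h₁five⟩ := h₁
  obtain ⟨h₂psd, h₂mul, h₂inv, h₂flip, h₂five⟩ := h₂
  have hbound₁ : ‖toEuclideanCLM (𝕜 := ℂ) ρ₁‖ ≤ 2 * r := by
    have := le_max_left ‖toEuclideanCLM (𝕜 := ℂ) ρ₁‖ ‖toEuclideanCLM (𝕜 := ℂ) ρ₂‖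
    linarith
  have hbound₂ : ‖toEuclideanCLM (𝕜 := ℂ) ρ₂‖ ≤ 2 * r := by
    have := le_max_right ‖toEuclideanCLM (𝕜 := ℂ) ρ₁‖ ‖toEuclideanCLM (𝕜 := ℂ) ρ₂‖
    linarith
  exact ⟨rho_psd ρ₁ ρ₂ r h₁psd h₂psd hr_pos.le,
    rho_mul ρ₁ ρ₂ r h₁mul h₂mul,
    rho_inv ρ₁ ρ₂ r h₁psd h₂psd hr_pos h₁inv h₂inv,
    rho_flip ρ₁ ρ₂ r h₁flip h₂flip,
    rho_five ρ₁ ρ₂ r h₁psd h₂psd h₁five h₂five hbound₁ hbound₂⟩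
end

section
/- Let n ≥ 1, let a ∈ Mₙ(ℂ) be self-adjoint (a* = a), and let v, w ∈ ℂⁿ be unit vectors. Then |⟨a v, v⟩ − ⟨a w, w⟩|² ≤ Σ_{i,j} |(a v)_i · w_j − v_i · (a w)_j|², i.e. the squared difference of the two expectation values is bounded by the squared ℓ²-norm of the vector a(v) ⊗ w − v ⊗ a(w) in ℂⁿ ⊗ ℂⁿ ≅ ℂ^(Fin n × Fin n). -/
/-!
For unit vectors `v, w`, the inner product of the unit vector `v ⊗ w` with `a v ⊗ w - v ⊗ a w`
is `⟨v, a v⟩ - ⟨w, a w⟩`, so the bound is Cauchy–Schwarz in `ℂⁿ ⊗ ℂⁿ`. The tensor product of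
the standard orthonormal bases identifies the norm there with the ℓ²-norm of coordinates
indexed by `Fin n × Fin n`.
-/

open Matrix TensorProduct

section TensorProduct

variable {𝕜 E F : Type*} [RCLike 𝕜] [NormedAddCommGroup E] [InnerProductSpace 𝕜 E]
  [NormedAddCommGroup F] [InnerProductSpace 𝕜 F]

theorem inner_tmul_tmul_sub_tmul (v v' : E) (w w' : F) :
    inner 𝕜 (v ⊗ₜ[𝕜] w) (v' ⊗ₜ[𝕜] w - v ⊗ₜ[𝕜] w') =
      inner 𝕜 v v' * (‖w‖ ^ 2 : 𝕜) - (‖v‖ ^ 2 : 𝕜) * inner 𝕜 w w' := by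
  rw [inner_sub_right, inner_tmul, inner_tmul, inner_self_eq_norm_sq_to_K,
    inner_self_eq_norm_sq_to_K]

theorem norm_inner_sub_inner_le_norm_tmul_sub_tmul {v : E} {w : F} (hv : ‖v‖ = 1)
    (hw : ‖w‖ = 1) (v' : E) (w' : F) :
    ‖inner 𝕜 v v' - inner 𝕜 w w'‖ ≤ ‖v' ⊗ₜ[𝕜] w - v ⊗ₜ[𝕜] w'‖ := by
  calc ‖inner 𝕜 v v' - inner 𝕜 w w'‖
      = ‖inner 𝕜 (v ⊗ₜ[𝕜] w) (v' ⊗ₜ[𝕜] w - v ⊗ₜ[𝕜] w')‖ := by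
        simp [inner_tmul_tmul_sub_tmul, hv, hw]
    _ ≤ ‖v ⊗ₜ[𝕜] w‖ * ‖v' ⊗ₜ[𝕜] w - v ⊗ₜ[𝕜] w'‖ := norm_inner_le_norm _ _
    _ = ‖v' ⊗ₜ[𝕜] w - v ⊗ₜ[𝕜] w'‖ := by rw [norm_tmul, hv, hw, one_mul, one_mul]

end TensorProduct

theorem EuclideanSpace.norm_sq_tmul_sub_tmul {𝕜 ι κ : Type*} [RCLike 𝕜] [Fintype ι]
    [Fintype κ] (v v' : ι → 𝕜) (w w' : κ → 𝕜) :
    ‖WithLp.toLp 2 v' ⊗ₜ[𝕜] WithLp.toLp 2 w - WithLp.toLp 2 v ⊗ₜ[𝕜] WithLp.toLp 2 w'‖ ^ 2 =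
      ∑ i, ∑ j, ‖v' i * w j - v i * w' j‖ ^ 2 := by
  rw [← LinearIsometryEquiv.norm_map ((basisFun ι 𝕜).tensorProduct (basisFun κ 𝕜)).repr,
    EuclideanSpace.norm_sq_eq, Fintype.sum_prod_type]
  simp [mul_comm]

theorem stmt12_general (n : ℕ) (a : Matrix (Fin n) (Fin n) ℂ)
    (v w : Fin n → ℂ)
    (hv : ∑ i, ‖v i‖ ^ 2 = 1) (hw : ∑ i, ‖w i‖ ^ 2 = 1) :
    ‖(∑ i, starRingEnd ℂ (v i) * a.mulVec v i) -
        ∑ i, starRingEnd ℂ (w i) * a.mulVec w i‖ ^ 2 ≤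
      ∑ i, ∑ j, ‖a.mulVec v i * w j - v i * a.mulVec w j‖ ^ 2 := by
  have norm_toLp_eq_one {u : Fin n → ℂ} (hu : ∑ i, ‖u i‖ ^ 2 = 1) : ‖WithLp.toLp 2 u‖ = 1 := by
    rw [EuclideanSpace.norm_eq, hu, Real.sqrt_one]
  have key := norm_inner_sub_inner_le_norm_tmul_sub_tmul (𝕜 := ℂ) (norm_toLp_eq_one hv)
    (norm_toLp_eq_one hw) (WithLp.toLp 2 (a *ᵥ v)) (WithLp.toLp 2 (a *ᵥ w))
  simp only [PiLp.inner_apply, RCLike.inner_apply'] at key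
  rw [← EuclideanSpace.norm_sq_tmul_sub_tmul]
  exact pow_le_pow_left₀ (norm_nonneg _) key 2

/-- for a self-adjoint `a ∈ Mₙ(ℂ)` and unit vectors `v, w ∈ ℂⁿ`, the
squared difference of expectation values `|⟨av, v⟩ − ⟨aw, w⟩|²` is bounded by
`‖a(v) ⊗ w − v ⊗ a(w)‖²`, the squared ℓ²-norm in `ℂⁿ ⊗ ℂⁿ ≅ ℂ^(Fin n × Fin n)`. -/
theorem stmt12 (n : ℕ) (hn : 1 ≤ n) (a : Matrix (Fin n) (Fin n) ℂ)
    (ha : a.conjTranspose = a) (v w : Fin n → ℂ)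
    (hv : ∑ i, ‖v i‖ ^ 2 = 1) (hw : ∑ i, ‖w i‖ ^ 2 = 1) :
    ‖(∑ i, starRingEnd ℂ (v i) * a.mulVec v i) -
        ∑ i, starRingEnd ℂ (w i) * a.mulVec w i‖ ^ 2 ≤
      ∑ i, ∑ j, ‖a.mulVec v i * w j - v i * a.mulVec w j‖ ^ 2 :=
  stmt12_general n a v w hv hw
end
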